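/- arXiv:0704.0698 — 6 statements merged into one kernel-verified Lean document; each statement's English description precedes it below -/
import Mathlib

section
/- First integrals of the averaged equation for the one-dimensional hard-core piston (from Section 3.1.1): Let n₁, n₂ ≥ 1 and m_{i,j} > 0 (i = 1,2, 1 ≤ j ≤ n_i). Suppose (Q, W, s_{1,1},…,s_{1,n₁}, s_{2,1},…,s_{2,n₂}) : I → ℝ^{n₁+n₂+2} is a differentiable solution on an interval I ∋ 0 of the averaged system dQ/dτ = W; dW/dτ = (Σ_{j=1}^{n₁} m_{1,j} s_{1,j}²)/Q − (Σ_{j=1}^{n₂} m_{2,j} s_{2,j}²)/(1−Q); ds_{1,j}/dτ = −s_{1,j}W/Q; ds_{2,j}/dτ = +s_{2,j}W/(1−Q), with 0 < Q(τ) < 1 for all τ ∈ I. Then for all τ ∈ I and all j: s_{1,j}(τ)·Q(τ) = s_{1,j}(0)·Q(0), s_{2,j}(τ)·(1−Q(τ)) = s_{2,j}(0)·(1−Q(0)), and the effective Hamiltonian is conserved: ½W(τ)² + E₁(0)·Q(0)²/Q(τ)² + E₂(0)·(1−Q(0))²/(1−Q(τ))² = ½W(0)² + E₁(0) + E₂(0),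 where E_i(τ) := Σ_{j=1}^{n_i} ½ m_{i,j} s_{i,j}(τ)². -/
/-!
Each gas speed scales like the inverse of its chamber length `L` (`s' / s = -L' / L`), so
`s_{i,j} · L_i` is constant. Hence the kinetic energies are
`E_i(τ) = E_i(0) L_i(0)² / L_i(τ)²`, and the piston obeys Newton's equation `Q'' = -V'(Q)` in
the potential `V(q) = E₁(0) Q(0)² / q² + E₂(0) (1 - Q(0))² / (1 - q)²`, so its energy
`W² / 2 + V(Q)` is conserved.
-/

theorem Set.OrdConnected.eq_of_hasDerivAt_eq_zero {I : Set ℝ} (hI : I.OrdConnected)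
    {f : ℝ → ℝ} (hf : ∀ x ∈ I, HasDerivAt f 0 x) {a b : ℝ} (ha : a ∈ I)
    (hb : b ∈ I) : f b = f a := by
  have := hI.convex.norm_image_sub_le_of_norm_hasDerivWithin_le
    (fun x hx => (hf x hx).hasDerivWithinAt) (fun _ _ => norm_zero.le) ha hb
  simpa [sub_eq_zero] using this

theorem hasDerivAt_mul_eq_zero_of_hasDerivAt_neg_div {s L : ℝ → ℝ} {v x : ℝ}
    (hL : HasDerivAt L v x) (hs : HasDerivAt s (-(s x * v) / L x) x) (hLx : L x ≠ 0) :
    HasDerivAt (fun t => s t * L t) 0 x :=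
  (hs.mul hL).congr_deriv (by field_simp; ring)

theorem Set.OrdConnected.mul_eq_of_hasDerivAt_neg_div {I : Set ℝ} (hI : I.OrdConnected)
    {s L v : ℝ → ℝ} (hL : ∀ x ∈ I, HasDerivAt L (v x) x)
    (hs : ∀ x ∈ I, HasDerivAt s (-(s x * v x) / L x) x) (hL0 : ∀ x ∈ I, L x ≠ 0)
    {a b : ℝ} (ha : a ∈ I) (hb : b ∈ I) : s b * L b = s a * L a :=
  hI.eq_of_hasDerivAt_eq_zero (f := fun t => s t * L t)
    (fun x hx => hasDerivAt_mul_eq_zero_of_hasDerivAt_neg_div (hL x hx) (hs x hx) (hL0 x hx))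
    ha hb

theorem Set.OrdConnected.energy_eq {I : Set ℝ} (hI : I.OrdConnected) {Q W V V' : ℝ → ℝ}
    (hQ : ∀ x ∈ I, HasDerivAt Q (W x) x) (hV : ∀ x ∈ I, HasDerivAt V (V' (Q x)) (Q x))
    (hW : ∀ x ∈ I, HasDerivAt W (-V' (Q x)) x) {a b : ℝ} (ha : a ∈ I) (hb : b ∈ I) :
    W b ^ 2 / 2 + V (Q b) = W a ^ 2 / 2 + V (Q a) :=
  hI.eq_of_hasDerivAt_eq_zero (f := fun t => W t ^ 2 / 2 + V (Q t))
    (fun x hx => ((((hW x hx).pow 2).div_const 2).add ((hV x hx).comp x (hQ x hx))).congr_deriv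
      (by ring)) ha hb

theorem sum_mul_sq_eq_of_mul_eq {ι : Type*} [Fintype ι] {m s s₀ : ι → ℝ} {L L₀ : ℝ}
    (hs : ∀ j, s j * L = s₀ j * L₀) (hL : L ≠ 0) :
    ∑ j, m j * s j ^ 2 = 2 * ((∑ j, m j * s₀ j ^ 2 / 2) * L₀ ^ 2) / L ^ 2 := by
  rw [eq_div_iff (pow_ne_zero 2 hL), Finset.sum_mul, Finset.sum_mul, Finset.mul_sum]
  refine Finset.sum_congr rfl fun j _ => ?_
  linear_combination m j * (s j * L + s₀ j * L₀) * hs j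

noncomputable def pistonPotential (a₁ a₂ q : ℝ) : ℝ := a₁ / q ^ 2 + a₂ / (1 - q) ^ 2

theorem hasDerivAt_pistonPotential (a₁ a₂ : ℝ) {q : ℝ} (hq : q ≠ 0) (hq' : 1 - q ≠ 0) :
    HasDerivAt (pistonPotential a₁ a₂) (2 * a₂ / (1 - q) ^ 3 - 2 * a₁ / q ^ 3) q := by
  have h₁ := (hasDerivAt_const q a₁).div ((hasDerivAt_id q).pow 2) (pow_ne_zero 2 hq)
  have h₂ :=
    (hasDerivAt_const q a₂).div (((hasDerivAt_id q).const_sub 1).pow 2) (pow_ne_zero 2 hq')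
  refine (h₁.add h₂).congr_deriv ?_
  simp only [Pi.pow_apply, id]
  field_simp
  ring

theorem piston_1d_first_integrals_general
    (n₁ n₂ : ℕ)
    (m₁ : Fin n₁ → ℝ) (m₂ : Fin n₂ → ℝ)
    (I : Set ℝ) (hI : I.OrdConnected) (h0 : (0:ℝ) ∈ I)
    (Q W : ℝ → ℝ) (s₁ : Fin n₁ → ℝ → ℝ) (s₂ : Fin n₂ → ℝ → ℝ)
    (hQrange : ∀ τ ∈ I, 0 < Q τ ∧ Q τ < 1)
    (hQ : ∀ τ ∈ I, HasDerivAt Q (W τ) τ)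
    (hW : ∀ τ ∈ I, HasDerivAt W
      ((∑ j, m₁ j * (s₁ j τ)^2) / Q τ - (∑ j, m₂ j * (s₂ j τ)^2) / (1 - Q τ)) τ)
    (hs₁ : ∀ j, ∀ τ ∈ I, HasDerivAt (s₁ j) (-(s₁ j τ * W τ) / Q τ) τ)
    (hs₂ : ∀ j, ∀ τ ∈ I, HasDerivAt (s₂ j) (s₂ j τ * W τ / (1 - Q τ)) τ) :
    ∀ τ ∈ I,
      (∀ j, s₁ j τ * Q τ = s₁ j 0 * Q 0) ∧
      (∀ j, s₂ j τ * (1 - Q τ) = s₂ j 0 * (1 - Q 0)) ∧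
      (W τ)^2 / 2
          + (∑ j, m₁ j * (s₁ j 0)^2 / 2) * (Q 0)^2 / (Q τ)^2
          + (∑ j, m₂ j * (s₂ j 0)^2 / 2) * (1 - Q 0)^2 / (1 - Q τ)^2
        = (W 0)^2 / 2 + (∑ j, m₁ j * (s₁ j 0)^2 / 2) + (∑ j, m₂ j * (s₂ j 0)^2 / 2) := by
  have hQ0 : ∀ x ∈ I, Q x ≠ 0 := fun x hx => (hQrange x hx).1.ne'
  have hQ1 : ∀ x ∈ I, 1 - Q x ≠ 0 := fun x hx => (sub_pos.2 (hQrange x hx).2).ne'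
  have inv₁ : ∀ j, ∀ x ∈ I, s₁ j x * Q x = s₁ j 0 * Q 0 := fun j x hx =>
    hI.mul_eq_of_hasDerivAt_neg_div hQ (hs₁ j) hQ0 h0 hx
  have inv₂ : ∀ j, ∀ x ∈ I, s₂ j x * (1 - Q x) = s₂ j 0 * (1 - Q 0) := fun j x hx =>
    hI.mul_eq_of_hasDerivAt_neg_div (fun y hy => (hQ y hy).const_sub 1)
      (fun y hy => (hs₂ j y hy).congr_deriv (by ring)) hQ1 h0 hx
  intro τ hτ
  refine ⟨fun j => inv₁ j τ hτ, fun j => inv₂ j τ hτ, ?_⟩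
  set a₁ := (∑ j, m₁ j * (s₁ j 0)^2 / 2) * (Q 0)^2
  set a₂ := (∑ j, m₂ j * (s₂ j 0)^2 / 2) * (1 - Q 0)^2
  have hNewton : ∀ x ∈ I, HasDerivAt W (-(2 * a₂ / (1 - Q x) ^ 3 - 2 * a₁ / Q x ^ 3)) x :=
    fun x hx => (hW x hx).congr_deriv <| by
      rw [sum_mul_sq_eq_of_mul_eq (fun j => inv₁ j x hx) (hQ0 x hx),
        sum_mul_sq_eq_of_mul_eq (fun j => inv₂ j x hx) (hQ1 x hx)]
      field_simp
      ring
  have hE := hI.energy_eq (V' := fun q => 2 * a₂ / (1 - q) ^ 3 - 2 * a₁ / q ^ 3) hQ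
    (fun x hx => hasDerivAt_pistonPotential a₁ a₂ (hQ0 x hx) (hQ1 x hx)) hNewton h0 hτ
  simp only [pistonPotential, a₁, a₂] at hE
  rw [add_assoc, hE, mul_div_cancel_right₀ _ (pow_ne_zero 2 (hQ0 0 h0)),
    mul_div_cancel_right₀ _ (pow_ne_zero 2 (hQ1 0 h0)), add_assoc]

/-- **First integrals of the averaged equation for the 1D hard-core piston.**
Along any solution of the averaged system with `0 < Q < 1`, one has
`s_{i,j}·(chamber length)` constant and the effective Hamiltonian
`½W² + E₁(0)Q(0)²/Q² + E₂(0)(1−Q(0))²/(1−Q)²` is conserved. -/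
theorem piston_1d_first_integrals
    (n₁ n₂ : ℕ) (hn₁ : 1 ≤ n₁) (hn₂ : 1 ≤ n₂)
    (m₁ : Fin n₁ → ℝ) (m₂ : Fin n₂ → ℝ)
    (hm₁ : ∀ j, 0 < m₁ j) (hm₂ : ∀ j, 0 < m₂ j)
    (I : Set ℝ) (hI : I.OrdConnected) (h0 : (0:ℝ) ∈ I)
    (Q W : ℝ → ℝ) (s₁ : Fin n₁ → ℝ → ℝ) (s₂ : Fin n₂ → ℝ → ℝ)
    (hQrange : ∀ τ ∈ I, 0 < Q τ ∧ Q τ < 1)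
    (hQ : ∀ τ ∈ I, HasDerivAt Q (W τ) τ)
    (hW : ∀ τ ∈ I, HasDerivAt W
      ((∑ j, m₁ j * (s₁ j τ)^2) / Q τ - (∑ j, m₂ j * (s₂ j τ)^2) / (1 - Q τ)) τ)
    (hs₁ : ∀ j, ∀ τ ∈ I, HasDerivAt (s₁ j) (-(s₁ j τ * W τ) / Q τ) τ)
    (hs₂ : ∀ j, ∀ τ ∈ I, HasDerivAt (s₂ j) (s₂ j τ * W τ / (1 - Q τ)) τ) :
    ∀ τ ∈ I,
      (∀ j, s₁ j τ * Q τ = s₁ j 0 * Q 0) ∧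
      (∀ j, s₂ j τ * (1 - Q τ) = s₂ j 0 * (1 - Q 0)) ∧
      (W τ)^2 / 2
          + (∑ j, m₁ j * (s₁ j 0)^2 / 2) * (Q 0)^2 / (Q τ)^2
          + (∑ j, m₂ j * (s₂ j 0)^2 / 2) * (1 - Q 0)^2 / (1 - Q τ)^2
        = (W 0)^2 / 2 + (∑ j, m₁ j * (s₁ j 0)^2 / 2) + (∑ j, m₂ j * (s₂ j 0)^2 / 2) :=
  piston_1d_first_integrals_general n₁ n₂ m₁ m₂ I hI h0 Q W s₁ s₂ hQrange hQ hW hs₁ hs₂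
end

section
/- Regularity and asymptotics of the soft-core periods (Lemma `1d_smooth_periods`): Fix masses m₁, m₂ > 0 and ℰ ∈ (0, κ(0)/2). For 0 < δ < ℰ/2, Q ∈ (ℰ, 1−ℰ), E ∈ (ℰ, κ(0)−ℰ), with a(E,δ) := δ·κ⁻¹(E), define T₁(Q,E,δ) := 2∫_{a}^{Q−a} √((m₁/2)/(E − κ_δ(s) − κ_δ(Q−s))) ds and T₂(Q,E,δ) := 2∫_{Q+a}^{1−a} √((m₂/2)/(E − κ_δ(s−Q) − κ_δ(1−s))) ds, and set T₁(Q,E,0) := √(2m₁/E)·Q and T₂(Q,E,0) := √(2m₂/E)·(1−Q). Then T₁ and T₂ are C¹ on the domain {(Q,E,δ) : Q ∈ (ℰ, 1−ℰ), E ∈ (ℰ, κ(0)−ℰ), 0 ≤ δ < ℰ/2}, and there is a constant C (depending on κ, m₁, m₂, ℰ) such that |T₁(Q,E,δ) − √(2m₁/E)·Q| ≤ C·δ and |T₂(Q,E,δ) − √(2m₂/E)·(1−Q)| ≤ C·δ on this domain. -/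
/-!
Substituting `s = δ x` turns `T₁` into `δ` times an integral over `[κ⁻¹ E, Q/δ - κ⁻¹ E]` of
`(E - κ x - κ (Q/δ - x))^(-1/2)`. As `κ` vanishes on `[1, ∞)` and `2δ < Q`, the two walls never
act at the same point, and the symmetry `x ↦ Q/δ - x` gives the exact formula
`T₁ = √(2m₁/E) Q + δ · 4√(m₁/2) (I(E) - E^(-1/2))`, where `I(E) = ∫_{κ⁻¹ E}^1 (E - κ x)^(-1/2) dx`;
likewise for `T₂`. Both claims therefore reduce to `I` being `C¹` on `(0, κ 0)`.
For `0 < c < E` the substitution `x = κ⁻¹ (E - u²)` removes the singularity at the turning point,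
`∫_{κ⁻¹ E}^{κ⁻¹ c} (E - κ x)^(-1/2) dx = 2√(E - c) ∫_0^1 -(κ⁻¹)'(E - (E - c) v²) dv`,
a parametric integral with a `C¹` integrand, while on `[κ⁻¹ c, 1]` the integrand is smooth
because `κ ≤ c < E` there.
-/
open Set MeasureTheory intervalIntegral Filter Function
open scoped Interval Topology

section ParametricIntegral

variable {G : Type*} [NormedAddCommGroup G] [NormedSpace ℝ G]

theorem continuousOn_intervalIntegral_of_continuousOn_prod {X : Type*} [TopologicalSpace X]
    {f : X → ℝ → G} {U : Set X} {a b : ℝ} (hab : a ≤ b)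
    (hf : ContinuousOn (uncurry f) (U ×ˢ Icc a b)) :
    ContinuousOn (fun x => ∫ t in a..b, f x t) U := by
  -- extend each slice continuously to ℝ by clamping the integration variable to `[a, b]`
  have hext : Continuous (uncurry fun (x : U) t => f x (projIcc a b hab t)) :=
    hf.comp_continuous (f := fun p : U × ℝ => ((p.1 : X), (projIcc a b hab p.2 : ℝ)))
      (by fun_prop) fun p => ⟨p.1.2, (projIcc a b hab p.2).2⟩
  rw [continuousOn_iff_continuous_domRestrict]
  refine (continuous_parametric_intervalIntegral_of_continuous' (μ := volume) hext a b).congr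
    fun x => integral_congr fun t ht => ?_
  rw [uIcc_of_le hab] at ht
  simp [projIcc_of_mem hab ht]

theorem hasDerivAt_intervalIntegral_of_continuousOn_prod {f f' : ℝ → ℝ → G} {U : Set ℝ}
    (hU : IsOpen U) {a b : ℝ} (hab : a ≤ b)
    (hf : ContinuousOn (uncurry f) (U ×ˢ Icc a b))
    (hff' : ∀ x ∈ U, ∀ t ∈ Icc a b, HasDerivAt (fun y => f y t) (f' x t) x)
    (hf' : ContinuousOn (uncurry f') (U ×ˢ Icc a b)) {x₀ : ℝ} (hx₀ : x₀ ∈ U) :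
    HasDerivAt (fun x => ∫ t in a..b, f x t) (∫ t in a..b, f' x₀ t) x₀ := by
  obtain ⟨r, hr, hball⟩ := Metric.isOpen_iff.1 hU x₀ hx₀
  have hcb : Metric.closedBall x₀ (r / 2) ⊆ U :=
    (Metric.closedBall_subset_ball (by linarith)).trans hball
  obtain ⟨M, hM⟩ := ((isCompact_closedBall x₀ (r / 2)).prod
    isCompact_Icc).exists_bound_of_continuousOn (hf'.mono (prod_mono hcb subset_rfl))
  have hIoc : Ι a b ⊆ Icc a b := by rw [uIoc_of_le hab]; exact Ioc_subset_Icc_self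
  have hslice : ∀ x ∈ U, ContinuousOn (f x) (Icc a b) := fun x hx =>
    hf.comp (f := fun t => (x, t)) (by fun_prop) fun t ht => ⟨hx, ht⟩
  have hslice' : ContinuousOn (f' x₀) (Icc a b) :=
    hf'.comp (f := fun t => (x₀, t)) (by fun_prop) fun t ht => ⟨hx₀, ht⟩
  have hnhds : Metric.ball x₀ (r / 2) ∈ 𝓝 x₀ := Metric.ball_mem_nhds x₀ (half_pos hr)
  have hsub : Metric.ball x₀ (r / 2) ⊆ U := Metric.ball_subset_closedBall.trans hcb
  refine (hasDerivAt_integral_of_dominated_loc_of_deriv_le (bound := fun _ => M) hnhds ?_ ?_ ?_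
    ?_ intervalIntegrable_const ?_).2
  · filter_upwards [hnhds] with x hx
    exact ((hslice x (hsub hx)).mono hIoc).aestronglyMeasurable measurableSet_uIoc
  · exact (hslice x₀ hx₀).intervalIntegrable_of_Icc hab
  · exact (hslice'.mono hIoc).aestronglyMeasurable measurableSet_uIoc
  · exact ae_of_all _ fun t ht x hx => hM (x, t) ⟨Metric.ball_subset_closedBall hx, hIoc ht⟩
  · exact ae_of_all _ fun t ht x hx => hff' x (hsub hx) t (hIoc ht)

theorem contDiffOn_intervalIntegral_of_continuousOn_prod {f f' : ℝ → ℝ → G} {U : Set ℝ}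
    (hU : IsOpen U) {a b : ℝ} (hab : a ≤ b)
    (hf : ContinuousOn (uncurry f) (U ×ˢ Icc a b))
    (hff' : ∀ x ∈ U, ∀ t ∈ Icc a b, HasDerivAt (fun y => f y t) (f' x t) x)
    (hf' : ContinuousOn (uncurry f') (U ×ˢ Icc a b)) :
    ContDiffOn ℝ 1 (fun x => ∫ t in a..b, f x t) U := by
  have hderiv := fun x (hx : x ∈ U) =>
    hasDerivAt_intervalIntegral_of_continuousOn_prod hU hab hf hff' hf' hx
  rw [show (1 : WithTop ℕ∞) = 0 + 1 from rfl, contDiffOn_succ_iff_deriv_of_isOpen hU]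
  refine ⟨fun x hx => (hderiv x hx).differentiableAt.differentiableWithinAt, by simp, ?_⟩
  rw [contDiffOn_zero]
  exact (continuousOn_intervalIntegral_of_continuousOn_prod hab hf').congr
    fun x hx => (hderiv x hx).deriv

end ParametricIntegral

theorem integral_inv_sqrt_sub_comp_eq {κ ψ ψ' : ℝ → ℝ} {c E : ℝ} (hcE : c < E)
    (hψ : ∀ y ∈ Icc c E, HasDerivAt ψ (ψ' y) y) (hψ' : ∀ y ∈ Icc c E, ψ' y ≤ 0)
    (hψ'c : ContinuousOn ψ' (Icc c E)) (hκψ : ∀ y ∈ Icc c E, κ (ψ y) = y) :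
    IntervalIntegrable (fun x => (√(E - κ x))⁻¹) volume (ψ E) (ψ c) ∧
      ∫ x in ψ E..ψ c, (√(E - κ x))⁻¹ =
        2 * √(E - c) * ∫ v in (0 : ℝ)..1, -ψ' (E - (E - c) * v ^ 2) := by
  set r := √(E - c)
  have hr : 0 < r := Real.sqrt_pos.2 (sub_pos.2 hcE)
  have hr2 : r ^ 2 = E - c := Real.sq_sqrt (sub_pos.2 hcE).le
  have hmem : ∀ u ∈ Icc 0 r, E - u ^ 2 ∈ Icc c E := fun u hu =>
    ⟨by nlinarith [hu.1, hu.2], by nlinarith⟩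
  -- substitute `x = ψ (E - u ^ 2)`, which removes the square-root singularity at `x = ψ E`
  set f : ℝ → ℝ := fun u => ψ (E - u ^ 2)
  set f' : ℝ → ℝ := fun u => ψ' (E - u ^ 2) * -(2 * u)
  have hf : ∀ u ∈ Icc 0 r, HasDerivAt f (f' u) u := fun u hu =>
    (hψ _ (hmem u hu)).comp u (by simpa using (hasDerivAt_pow 2 u).const_sub E)
  have hfc : ContinuousOn f (Icc 0 r) := fun u hu => (hf u hu).continuousAt.continuousWithinAt
  have hf'nonneg : ∀ u ∈ Ioo 0 r, 0 ≤ f' u := fun u hu =>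
    mul_nonneg_of_nonpos_of_nonpos (hψ' _ (hmem u (Ioo_subset_Icc_self hu))) (by linarith [hu.1])
  have hf0 : f 0 = ψ E := by simp [f]
  have hfr : f r = ψ c := by simp only [f, hr2, sub_sub_cancel]
  have hψEc : ψ E ≤ ψ c := hf0 ▸ hfr ▸ monotoneOn_of_hasDerivWithinAt_nonneg (convex_Icc 0 r) hfc
    (fun u hu => (hf u (interior_subset hu)).hasDerivWithinAt)
    (by simpa only [interior_Icc] using hf'nonneg) ⟨le_rfl, hr.le⟩ ⟨hr.le, le_rfl⟩ hr.le
  have hjac : EqOn (fun u => f' u • (√(E - κ (f u)))⁻¹) (fun u => 2 * -ψ' (E - u ^ 2))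
      (Ioc 0 r) := fun u hu => by
    have hu0 : u ≠ 0 := hu.1.ne'
    simp only [f, f', smul_eq_mul, hκψ _ (hmem u (Ioc_subset_Icc_self hu)), sub_sub_cancel,
      Real.sqrt_sq hu.1.le]
    field_simp
  have hΦ : IntegrableOn (fun u => 2 * -ψ' (E - u ^ 2)) (Ioc 0 r) :=
    (ContinuousOn.integrableOn_Icc (continuousOn_const.mul
      (hψ'c.comp (by fun_prop) hmem).neg)).mono_set Ioc_subset_Icc_self
  have hint := integrableOn_Icc_deriv_smul_iff_of_deriv_nonneg
    (g := fun x => (√(E - κ x))⁻¹) hfc (fun u hu => hf u (Ioo_subset_Icc_self hu)) hf'nonneg hr.le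
  have hval := integral_Icc_deriv_smul_of_deriv_nonneg
    (g := fun x => (√(E - κ x))⁻¹) hfc (fun u hu => hf u (Ioo_subset_Icc_self hu)) hf'nonneg hr.le
  rw [hf0, hfr, integrableOn_Icc_iff_integrableOn_Ioc, integrableOn_Icc_iff_integrableOn_Ioc,
    integrableOn_congr_fun hjac measurableSet_Ioc] at hint
  rw [hf0, hfr, integral_Icc_eq_integral_Ioc, integral_Icc_eq_integral_Ioc,
    setIntegral_congr_fun measurableSet_Ioc hjac] at hval
  refine ⟨(intervalIntegrable_iff_integrableOn_Ioc_of_le hψEc).2 (hint.1 hΦ), ?_⟩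
  have hscale := smul_integral_comp_mul_left (a := 0) (b := 1)
    (fun u => 2 * -ψ' (E - u ^ 2)) r
  rw [mul_zero, mul_one, smul_eq_mul] at hscale
  rw [integral_of_le hψEc, ← hval, ← integral_of_le hr.le, ← hscale, ← hr2,
    intervalIntegral.integral_const_mul, ← mul_assoc, mul_comm r 2]
  simp only [mul_pow]

theorem contDiffOn_integral_comp_sub_mul_sq {φ : ℝ → ℝ} {a c d : ℝ}
    (hφ : ContDiffOn ℝ 1 φ (Ioo a d)) (hac : a < c) :
    ContDiffOn ℝ 1 (fun E => ∫ v in (0 : ℝ)..1, φ (E - (E - c) * v ^ 2)) (Ioo c d) := by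
  have hmem : ∀ p ∈ Ioo c d ×ˢ Icc (0 : ℝ) 1, p.1 - (p.1 - c) * p.2 ^ 2 ∈ Ioo a d := by
    rintro ⟨E, v⟩ ⟨⟨hcE, hEd⟩, hv0, hv1⟩
    have hv2 : v ^ 2 ≤ 1 := by nlinarith
    constructor <;> nlinarith
  have hφ' := hφ.continuousOn_deriv_of_isOpen isOpen_Ioo le_rfl
  refine contDiffOn_intervalIntegral_of_continuousOn_prod isOpen_Ioo zero_le_one
    (f' := fun E v => deriv φ (E - (E - c) * v ^ 2) * (1 - v ^ 2))
    (hφ.continuousOn.comp (by fun_prop) hmem) (fun E hE v hv => ?_)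
    ((hφ'.comp (by fun_prop) hmem).mul (by fun_prop))
  have hinner : HasDerivAt (fun y => y - (y - c) * v ^ 2) (1 - v ^ 2) E := by
    simpa using (hasDerivAt_id' E).fun_sub (((hasDerivAt_id' E).sub_const c).mul_const (v ^ 2))
  exact (((hφ.differentiableOn one_ne_zero) _ (hmem (E, v) ⟨hE, hv⟩)).differentiableAt
    (isOpen_Ioo.mem_nhds (hmem (E, v) ⟨hE, hv⟩))).hasDerivAt.comp E hinner

theorem contDiffOn_integral_inv_sqrt_sub {κ : ℝ → ℝ} {a b c : ℝ} (hκ : Continuous κ)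
    (hab : a ≤ b) (hκc : ∀ x ∈ Icc a b, κ x ≤ c) :
    ContDiffOn ℝ 1 (fun E => ∫ x in a..b, (√(E - κ x))⁻¹) (Ioi c) := by
  have hpos : ∀ p ∈ Ioi c ×ˢ Icc a b, 0 < √(p.1 - κ p.2) := fun p hp =>
    Real.sqrt_pos.2 (by linarith [mem_Ioi.1 hp.1, hκc _ hp.2])
  refine contDiffOn_intervalIntegral_of_continuousOn_prod isOpen_Ioi hab
    (f' := fun E x => -(1 / (2 * √(E - κ x))) / √(E - κ x) ^ 2)
    (ContinuousOn.inv₀ (by fun_prop) fun p hp => (hpos p hp).ne') (fun E hE x hx => ?_)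
    (ContinuousOn.div (ContinuousOn.neg (continuousOn_const.div (by fun_prop)
      fun p hp => by simp [(hpos p hp).ne'])) (by fun_prop) fun p hp => by simp [(hpos p hp).ne'])
  have hE := hpos (E, x) ⟨hE, hx⟩
  exact ((Real.hasDerivAt_sqrt (Real.sqrt_pos.1 hE).ne').comp E
    ((hasDerivAt_id' E).sub_const (κ x))).fun_inv hE.ne' |>.congr_deriv (by simp)

theorem integral_eq_two_mul_integral_of_symm {g : ℝ → ℝ} {k M : ℝ} (hg : ∀ x, g (M - x) = g x)
    (hint : IntervalIntegrable g volume k (M / 2)) :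
    ∫ x in k..M - k, g x = 2 * ∫ x in k..M / 2, g x := by
  have hMM : M - M / 2 = M / 2 := by ring
  have hint' : IntervalIntegrable g volume (M / 2) (M - k) := by
    simpa only [hg, hMM] using (hint.comp_sub_left M).symm
  have hrefl : ∫ x in M / 2..M - k, g x = ∫ x in k..M / 2, g x := by
    simpa only [hg, hMM] using (integral_comp_sub_left (a := k) (b := M / 2) g M).symm
  rw [← integral_add_adjacent_intervals hint hint', hrefl, two_mul]

theorem integral_inv_sqrt_sub_of_one_le {κ : ℝ → ℝ} (hκ0 : ∀ x, 1 ≤ x → κ x = 0) {E k b : ℝ}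
    (hb : 1 ≤ b) (hF : IntervalIntegrable (fun x => (√(E - κ x))⁻¹) volume k 1) :
    IntervalIntegrable (fun x => (√(E - κ x))⁻¹) volume k b ∧
      ∫ x in k..b, (√(E - κ x))⁻¹ = (∫ x in k..1, (√(E - κ x))⁻¹) + (b - 1) * (√E)⁻¹ := by
  have hconst : EqOn (fun x => (√(E - κ x))⁻¹) (fun _ => (√E)⁻¹) (uIcc 1 b) := fun x hx => by
    rw [uIcc_of_le hb] at hx
    simp [hκ0 x hx.1]
  have htail : IntervalIntegrable (fun x => (√(E - κ x))⁻¹) volume 1 b :=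
    intervalIntegrable_const.congr (hconst.symm.mono uIoc_subset_uIcc)
  refine ⟨hF.trans htail, ?_⟩
  rw [← integral_add_adjacent_intervals hF htail, integral_congr hconst,
    intervalIntegral.integral_const, smul_eq_mul]

theorem two_mul_integral_sqrt_div_eq {κ : ℝ → ℝ} (hκ0 : ∀ x, 1 ≤ x → κ x = 0)
    {m E L δ k : ℝ} (hm : 0 ≤ m) (hδ : 0 < δ) (hL : 2 * δ ≤ L) (hk : k ≤ 1)
    (hF : IntervalIntegrable (fun x => (√(E - κ x))⁻¹) volume k 1) :
    2 * ∫ s in δ * k..L - δ * k, √(m / 2 / (E - κ (s / δ) - κ ((L - s) / δ))) =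
      √(2 * m / E) * L + δ * (4 * √(m / 2) * ((∫ x in k..1, (√(E - κ x))⁻¹) - (√E)⁻¹)) := by
  set M := L / δ
  have hM : 1 ≤ M / 2 := by rw [le_div_iff₀ two_pos, le_div_iff₀ hδ]; linarith
  set g : ℝ → ℝ := fun x => (√(E - κ x - κ (M - x)))⁻¹
  -- on the left half only the left wall acts
  have hgF : EqOn g (fun x => (√(E - κ x))⁻¹) (uIcc k (M / 2)) := fun x hx => by
    rw [uIcc_of_le (hk.trans hM)] at hx
    simp [g, hκ0 (M - x) (by linarith [hx.2])]
  have hF' := integral_inv_sqrt_sub_of_one_le hκ0 hM hF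
  have hsymm := integral_eq_two_mul_integral_of_symm (g := g) (k := k) (M := M)
    (fun x => by simp only [g, sub_sub_cancel, sub_right_comm])
    (hF'.1.congr (hgF.symm.mono uIoc_subset_uIcc))
  have hsqrt : √(2 * m / E) = 2 * √(m / 2) * (√E)⁻¹ := by
    rw [show 2 * m / E = 2 ^ 2 * (m / 2) / E by ring, Real.sqrt_div (by positivity),
      Real.sqrt_mul (by positivity), Real.sqrt_sq zero_le_two, div_eq_mul_inv]
  calc 2 * ∫ s in δ * k..L - δ * k, √(m / 2 / (E - κ (s / δ) - κ ((L - s) / δ)))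
      = 2 * (√(m / 2) * ∫ s in δ * k..L - δ * k, g (s / δ)) := by
        rw [← intervalIntegral.integral_const_mul √(m / 2)]
        refine congrArg (2 * ·) (integral_congr fun s _ => ?_)
        simp only [g, M]
        rw [Real.sqrt_div (by positivity), div_eq_mul_inv, ← sub_div]
    _ = 2 * (√(m / 2) * (δ * (2 * ((∫ x in k..1, (√(E - κ x))⁻¹) + (M / 2 - 1) * (√E)⁻¹)))) := by
        rw [integral_comp_div _ hδ.ne', mul_div_cancel_left₀ _ hδ.ne', sub_div,
          mul_div_cancel_left₀ _ hδ.ne', hsymm, integral_congr hgF, hF'.2, smul_eq_mul]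
    _ = √(2 * m / E) * L + δ * (4 * √(m / 2) * ((∫ x in k..1, (√(E - κ x))⁻¹) - (√E)⁻¹)) := by
        rw [hsqrt]
        simp only [M]
        field_simp
        ring

theorem integral_sqrt_div_comp_sub_right (κ : ℝ → ℝ) (m E Q δ k : ℝ) :
    ∫ s in Q + δ * k..1 - δ * k, √(m / 2 / (E - κ ((s - Q) / δ) - κ ((1 - s) / δ))) =
      ∫ s in δ * k..(1 - Q) - δ * k, √(m / 2 / (E - κ (s / δ) - κ ((1 - Q - s) / δ))) := by
  simpa only [sub_sub_sub_cancel_right, add_sub_cancel_left, sub_right_comm] using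
    integral_comp_sub_right (a := Q + δ * k) (b := 1 - δ * k)
      (fun s => √(m / 2 / (E - κ (s / δ) - κ ((1 - Q - s) / δ)))) Q

theorem contDiffOn_uncurry_of_eq_sqrt_div_mul_add_mul {T : ℝ → ℝ → ℝ → ℝ} {f h : ℝ → ℝ}
    {S U V : Set ℝ} {m : ℝ} (hf : ContDiff ℝ 1 f) (hh : ContDiffOn ℝ 1 h U) (hU : U ⊆ Ioi 0)
    (hT : ∀ Q ∈ S, ∀ E ∈ U, ∀ δ ∈ V, T Q E δ = √(2 * m / E) * f Q + δ * h E) :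
    ContDiffOn ℝ 1 (fun p : ℝ × ℝ × ℝ => T p.1 p.2.1 p.2.2) (S ×ˢ U ×ˢ V) := by
  have hsqrt : ContDiffOn ℝ 1 (fun E => √(2 * m / E)) (Ioi 0) := fun E hE => by
    have heq : (fun E => √(2 * m) / √E) =ᶠ[𝓝 E] fun E => √(2 * m / E) :=
      eventually_of_mem (Ioi_mem_nhds hE) fun y hy => (Real.sqrt_div' _ (le_of_lt hy)).symm
    exact ((contDiffAt_const.div (Real.contDiffAt_sqrt hE.ne')
      (Real.sqrt_pos.2 hE).ne').congr_of_eventuallyEq heq.symm).contDiffWithinAt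
  have hE : ContDiff ℝ 1 fun p : ℝ × ℝ × ℝ => p.2.1 := by fun_prop
  have hmaps : MapsTo (fun p : ℝ × ℝ × ℝ => p.2.1) (S ×ˢ U ×ˢ V) U := fun p hp => hp.2.1
  exact ((((hsqrt.mono hU).comp hE.contDiffOn hmaps).mul (hf.comp contDiff_fst).contDiffOn).add
    ((contDiff_snd.comp contDiff_snd).contDiffOn.mul (hh.comp hE.contDiffOn hmaps))).congr
    fun p hp => hT _ hp.1 _ hp.2.1 _ hp.2.2

theorem exists_abs_sub_le_mul_of_eq_add_mul {T : ℝ → ℝ → ℝ → ℝ} {g : ℝ → ℝ → ℝ} {h : ℝ → ℝ}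
    {S V : Set ℝ} {a b : ℝ} (hh : ContinuousOn h (Icc a b)) (hV : V ⊆ Ici 0)
    (hT : ∀ Q ∈ S, ∀ E ∈ Ioo a b, ∀ δ ∈ V, T Q E δ = g Q E + δ * h E) :
    ∃ C, ∀ Q ∈ S, ∀ E ∈ Ioo a b, ∀ δ ∈ V, |T Q E δ - g Q E| ≤ C * δ := by
  obtain ⟨C, hC⟩ := isCompact_Icc.exists_bound_of_continuousOn hh
  refine ⟨C, fun Q hQ E hE δ hδ => ?_⟩
  rw [hT Q hQ E hE δ hδ, add_sub_cancel_left, abs_mul, abs_of_nonneg (hV hδ), mul_comm C]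
  exact mul_le_mul_of_nonneg_left (hC E (Ioo_subset_Icc_self hE)) (hV hδ)

theorem antitone_of_deriv_neg_of_eq_zero {κ : ℝ → ℝ} {a : ℝ} (hκ : Continuous κ)
    (hκ0 : ∀ x, a ≤ x → κ x = 0) (hκ' : ∀ x, x < a → deriv κ x < 0) : Antitone κ :=
  AntitoneOn.Iic_union_Ici (a := a)
    (strictAntiOn_of_deriv_neg (convex_Iic a) hκ.continuousOn
      fun x hx => hκ' x (by simpa using hx)).antitoneOn
    fun x hx y hy _ => by rw [hκ0 x hx, hκ0 y hy]

/-- `δ √(m/2) wallIntegral κ κinv E` is the time a particle of mass `m` and energy `E` spends in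
a wall `κ (· / δ)` between its turning point and the edge of the wall. -/
noncomputable def wallIntegral (κ κinv : ℝ → ℝ) (E : ℝ) : ℝ :=
  ∫ x in κinv E..1, (√(E - κ x))⁻¹

noncomputable def periodCorrection (κ κinv : ℝ → ℝ) (m E : ℝ) : ℝ :=
  4 * √(m / 2) * (wallIntegral κ κinv E - (√E)⁻¹)

section SoftWall

variable {κ κinv : ℝ → ℝ}

theorem integral_inv_sqrt_sub_eq_add (hκ : Continuous κ) (hκa : Antitone κ)
    (hκinv : ∀ y ∈ Icc 0 (κ 0), κ (κinv y) = y ∧ κinv y ∈ Icc (0 : ℝ) 1)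
    (hκinvC1 : ContDiffOn ℝ 1 κinv (Ioo 0 (κ 0)))
    (hκinv' : ∀ y ∈ Ioo 0 (κ 0), deriv κinv y ≤ 0) {c E : ℝ} (hc : 0 < c) (hcE : c < E)
    (hE : E < κ 0) :
    IntervalIntegrable (fun x => (√(E - κ x))⁻¹) volume (κinv E) 1 ∧
      ∫ x in κinv E..1, (√(E - κ x))⁻¹ =
        2 * √(E - c) * (∫ v in (0 : ℝ)..1, -deriv κinv (E - (E - c) * v ^ 2)) +
          ∫ x in κinv c..1, (√(E - κ x))⁻¹ := by
  have hsub : Icc c E ⊆ Ioo 0 (κ 0) := Icc_subset_Ioo hc hE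
  have hψ : ∀ y ∈ Icc c E, HasDerivAt κinv (deriv κinv y) y := fun y hy =>
    ((hκinvC1.differentiableOn one_ne_zero y (hsub hy)).differentiableAt
      (isOpen_Ioo.mem_nhds (hsub hy))).hasDerivAt
  have hcore := integral_inv_sqrt_sub_comp_eq hcE hψ (fun y hy => hκinv' y (hsub hy))
    ((hκinvC1.continuousOn_deriv_of_isOpen isOpen_Ioo le_rfl).mono hsub)
    fun y hy => (hκinv y (Ioo_subset_Icc_self (hsub hy))).1
  have hκc := hκinv c ⟨hc.le, by linarith⟩
  have htail : IntervalIntegrable (fun x => (√(E - κ x))⁻¹) volume (κinv c) 1 := by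
    refine ContinuousOn.intervalIntegrable (ContinuousOn.inv₀ (by fun_prop) fun x hx => ?_)
    rw [uIcc_of_le hκc.2.2] at hx
    have : κ x ≤ c := hκc.1 ▸ hκa hx.1
    exact (Real.sqrt_pos.2 (by linarith)).ne'
  exact ⟨hcore.1.trans htail, by rw [← integral_add_adjacent_intervals hcore.1 htail, hcore.2]⟩

theorem contDiffOn_wallIntegral (hκ : Continuous κ) (hκa : Antitone κ)
    (hκinv : ∀ y ∈ Icc 0 (κ 0), κ (κinv y) = y ∧ κinv y ∈ Icc (0 : ℝ) 1)
    (hκinvC2 : ContDiffOn ℝ 2 κinv (Ioo 0 (κ 0)))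
    (hκinv' : ∀ y ∈ Ioo 0 (κ 0), deriv κinv y ≤ 0) :
    ContDiffOn ℝ 1 (wallIntegral κ κinv) (Ioo 0 (κ 0)) := by
  refine contDiffOn_of_locally_contDiffOn fun E₀ hE₀ =>
    ⟨Ioi (E₀ / 2), isOpen_Ioi, half_lt_self hE₀.1, ?_⟩
  set c := E₀ / 2
  have hc : 0 < c := half_pos hE₀.1
  have hcE₀ : c < E₀ := half_lt_self hE₀.1
  have hsub : Ioo 0 (κ 0) ∩ Ioi c ⊆ Ioo c (κ 0) := fun E hE => ⟨hE.2, hE.1.2⟩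
  have hsub' : Ioo 0 (κ 0) ∩ Ioi c ⊆ Ioi c := inter_subset_right
  have hκc := hκinv c ⟨hc.le, by linarith [hE₀.2]⟩
  have hA := contDiffOn_integral_comp_sub_mul_sq
    (hκinvC2.deriv_of_isOpen isOpen_Ioo (m := 1) le_rfl).neg hc
  have hB := contDiffOn_integral_inv_sqrt_sub hκ hκc.2.2 fun x hx => hκc.1 ▸ hκa hx.1
  have hsqrt : ContDiffOn ℝ 1 (fun E => √(E - c)) (Ioi c) := fun E hE =>
    ((Real.contDiffAt_sqrt (sub_pos.2 hE).ne').comp (f := fun E => E - c) E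
      (contDiffAt_id.sub contDiffAt_const)).contDiffWithinAt
  refine (((((contDiffOn_const (c := (2 : ℝ))).mul hsqrt).mono hsub').mul (hA.mono hsub)).add
    (hB.mono hsub')).congr fun E hE => ?_
  exact (integral_inv_sqrt_sub_eq_add hκ hκa hκinv (hκinvC2.of_le one_le_two) hκinv' hc hE.2
    hE.1.2).2

theorem contDiffOn_periodCorrection (hκ : Continuous κ) (hκa : Antitone κ)
    (hκinv : ∀ y ∈ Icc 0 (κ 0), κ (κinv y) = y ∧ κinv y ∈ Icc (0 : ℝ) 1)
    (hκinvC2 : ContDiffOn ℝ 2 κinv (Ioo 0 (κ 0)))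
    (hκinv' : ∀ y ∈ Ioo 0 (κ 0), deriv κinv y ≤ 0) (m : ℝ) :
    ContDiffOn ℝ 1 (periodCorrection κ κinv m) (Ioo 0 (κ 0)) :=
  contDiffOn_const.mul ((contDiffOn_wallIntegral hκ hκa hκinv hκinvC2 hκinv').sub fun _ hE =>
    ((Real.contDiffAt_sqrt hE.1.ne').inv (Real.sqrt_pos.2 hE.1).ne').contDiffWithinAt)

theorem two_mul_integral_sqrt_div_eq_periodCorrection (hκ : Continuous κ) (hκa : Antitone κ)
    (hκ0 : ∀ x, 1 ≤ x → κ x = 0)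
    (hκinv : ∀ y ∈ Icc 0 (κ 0), κ (κinv y) = y ∧ κinv y ∈ Icc (0 : ℝ) 1)
    (hκinvC1 : ContDiffOn ℝ 1 κinv (Ioo 0 (κ 0)))
    (hκinv' : ∀ y ∈ Ioo 0 (κ 0), deriv κinv y ≤ 0) {m E L δ : ℝ} (hm : 0 ≤ m)
    (hE : E ∈ Ioo 0 (κ 0)) (hδ : 0 < δ) (hL : 2 * δ ≤ L) :
    2 * ∫ s in δ * κinv E..L - δ * κinv E, √(m / 2 / (E - κ (s / δ) - κ ((L - s) / δ))) =
      √(2 * m / E) * L + δ * periodCorrection κ κinv m E :=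
  two_mul_integral_sqrt_div_eq hκ0 hm hδ hL (hκinv E (Ioo_subset_Icc_self hE)).2.2
    (integral_inv_sqrt_sub_eq_add hκ hκa hκinv hκinvC1 hκinv' (half_pos hE.1) (half_lt_self hE.1)
      hE.2).1

end SoftWall

theorem one_d_smooth_periods_general
    (κ : ℝ → ℝ) (hκC2 : ContDiff ℝ 2 κ)
    (hκ0 : ∀ x : ℝ, 1 ≤ x → κ x = 0) (hκ'neg : ∀ x : ℝ, x < 1 → deriv κ x < 0)
    (κinv : ℝ → ℝ)
    (hκinv_right : ∀ y ∈ Set.Icc 0 (κ 0), κ (κinv y) = y ∧ κinv y ∈ Set.Icc (0:ℝ) 1)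
    (hκinvC2 : ContDiffOn ℝ 2 κinv (Set.Ioc 0 (κ 0)))
    (hκinv'neg : ∀ y ∈ Set.Ioc 0 (κ 0), deriv κinv y < 0)
    (m₁ m₂ : ℝ) (hm₁ : 0 < m₁) (hm₂ : 0 < m₂)
    (ℰ : ℝ) (hℰpos : 0 < ℰ)
    (T₁ T₂ : ℝ → ℝ → ℝ → ℝ)
    (hT₁0 : ∀ Q E, T₁ Q E 0 = Real.sqrt (2 * m₁ / E) * Q)
    (hT₂0 : ∀ Q E, T₂ Q E 0 = Real.sqrt (2 * m₂ / E) * (1 - Q))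
    (hT₁ : ∀ Q E δ, 0 < δ → T₁ Q E δ =
      2 * ∫ s in (δ * κinv E)..(Q - δ * κinv E),
        Real.sqrt ((m₁ / 2) / (E - κ (s / δ) - κ ((Q - s) / δ))))
    (hT₂ : ∀ Q E δ, 0 < δ → T₂ Q E δ =
      2 * ∫ s in (Q + δ * κinv E)..(1 - δ * κinv E),
        Real.sqrt ((m₂ / 2) / (E - κ ((s - Q) / δ) - κ ((1 - s) / δ)))) :
    ContDiffOn ℝ 1 (fun p : ℝ × ℝ × ℝ => T₁ p.1 p.2.1 p.2.2)
        (Set.Ioo ℰ (1 - ℰ) ×ˢ Set.Ioo ℰ (κ 0 - ℰ) ×ˢ Set.Ico 0 (ℰ / 2)) ∧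
    ContDiffOn ℝ 1 (fun p : ℝ × ℝ × ℝ => T₂ p.1 p.2.1 p.2.2)
        (Set.Ioo ℰ (1 - ℰ) ×ˢ Set.Ioo ℰ (κ 0 - ℰ) ×ˢ Set.Ico 0 (ℰ / 2)) ∧
    ∃ C : ℝ, ∀ Q ∈ Set.Ioo ℰ (1 - ℰ), ∀ E ∈ Set.Ioo ℰ (κ 0 - ℰ),
      ∀ δ ∈ Set.Ico (0:ℝ) (ℰ / 2),
        |T₁ Q E δ - Real.sqrt (2 * m₁ / E) * Q| ≤ C * δ ∧
        |T₂ Q E δ - Real.sqrt (2 * m₂ / E) * (1 - Q)| ≤ C * δ := by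
  have hκ := hκC2.continuous
  have hκa := antitone_of_deriv_neg_of_eq_zero hκ hκ0 hκ'neg
  have hκinvC2' := hκinvC2.mono Ioo_subset_Ioc_self
  have hκinv' : ∀ y ∈ Ioo 0 (κ 0), deriv κinv y ≤ 0 := fun y hy =>
    (hκinv'neg y (Ioo_subset_Ioc_self hy)).le
  have hEℰ : Icc ℰ (κ 0 - ℰ) ⊆ Ioo 0 (κ 0) := Icc_subset_Ioo hℰpos (by linarith)
  have hh := fun m => (contDiffOn_periodCorrection hκ hκa hκinv_right hκinvC2' hκinv' m).mono hEℰ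
  have hperiod := fun {m E L δ : ℝ} (hm : 0 < m) (hE : E ∈ Ioo ℰ (κ 0 - ℰ)) =>
    two_mul_integral_sqrt_div_eq_periodCorrection (L := L) (δ := δ) hκ hκa hκ0 hκinv_right
      (hκinvC2'.of_le one_le_two) hκinv' hm.le (hEℰ (Ioo_subset_Icc_self hE))
  have hT₁eq : ∀ Q ∈ Ioo ℰ (1 - ℰ), ∀ E ∈ Ioo ℰ (κ 0 - ℰ), ∀ δ ∈ Ico 0 (ℰ / 2),
      T₁ Q E δ = √(2 * m₁ / E) * Q + δ * periodCorrection κ κinv m₁ E := by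
    intro Q hQ E hE δ hδ
    rcases hδ.1.eq_or_lt with rfl | hδ0
    · simp [hT₁0]
    · rw [hT₁ Q E δ hδ0, hperiod hm₁ hE hδ0 (by linarith [hQ.1, hδ.2])]
  have hT₂eq : ∀ Q ∈ Ioo ℰ (1 - ℰ), ∀ E ∈ Ioo ℰ (κ 0 - ℰ), ∀ δ ∈ Ico 0 (ℰ / 2),
      T₂ Q E δ = √(2 * m₂ / E) * (1 - Q) + δ * periodCorrection κ κinv m₂ E := by
    intro Q hQ E hE δ hδ
    rcases hδ.1.eq_or_lt with rfl | hδ0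
    · simp [hT₂0]
    · rw [hT₂ Q E δ hδ0, integral_sqrt_div_comp_sub_right,
        hperiod hm₂ hE hδ0 (by linarith [hQ.2, hδ.2])]
  have hU : Ioo ℰ (κ 0 - ℰ) ⊆ Ioi 0 := fun E hE => hℰpos.trans hE.1
  have hδ : Ico 0 (ℰ / 2) ⊆ Ici 0 := fun _ hδ => hδ.1
  obtain ⟨C₁, hC₁⟩ := exists_abs_sub_le_mul_of_eq_add_mul (hh m₁).continuousOn hδ hT₁eq
  obtain ⟨C₂, hC₂⟩ := exists_abs_sub_le_mul_of_eq_add_mul (hh m₂).continuousOn hδ hT₂eq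
  refine ⟨contDiffOn_uncurry_of_eq_sqrt_div_mul_add_mul contDiff_id
      ((hh m₁).mono Ioo_subset_Icc_self) hU hT₁eq,
    contDiffOn_uncurry_of_eq_sqrt_div_mul_add_mul (contDiff_const.sub contDiff_id)
      ((hh m₂).mono Ioo_subset_Icc_self) hU hT₂eq,
    max C₁ C₂, fun Q hQ E hE δ hδ => ⟨?_, ?_⟩⟩
  · exact (hC₁ Q hQ E hE δ hδ).trans (mul_le_mul_of_nonneg_right (le_max_left _ _) hδ.1)
  · exact (hC₂ Q hQ E hE δ hδ).trans (mul_le_mul_of_nonneg_right (le_max_right _ _) hδ.1)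

/-- **Lemma (Regularity and asymptotics of the soft-core periods).**
The periods `T₁, T₂` of the frozen soft-core motion are `C¹` on
`(ℰ,1−ℰ) × (ℰ,κ(0)−ℰ) × [0,ℰ/2)` (including `δ = 0`), and
`T₁(Q,E,δ) = √(2m₁/E)·Q + O(δ)`, `T₂(Q,E,δ) = √(2m₂/E)·(1−Q) + O(δ)` uniformly. -/
theorem one_d_smooth_periods
    (κ : ℝ → ℝ) (hκC2 : ContDiff ℝ 2 κ)
    (hκ0 : ∀ x : ℝ, 1 ≤ x → κ x = 0) (hκ'neg : ∀ x : ℝ, x < 1 → deriv κ x < 0)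
    (κinv : ℝ → ℝ)
    (hκinv_left : ∀ x ∈ Set.Icc (0:ℝ) 1, κinv (κ x) = x)
    (hκinv_right : ∀ y ∈ Set.Icc 0 (κ 0), κ (κinv y) = y ∧ κinv y ∈ Set.Icc (0:ℝ) 1)
    (hκinvC2 : ContDiffOn ℝ 2 κinv (Set.Ioc 0 (κ 0)))
    (hκinv'neg : ∀ y ∈ Set.Ioc 0 (κ 0), deriv κinv y < 0)
    (hκinv'atbot : Filter.Tendsto (deriv κinv) (nhdsWithin 0 (Set.Ioi 0)) Filter.atBot)
    (m₁ m₂ : ℝ) (hm₁ : 0 < m₁) (hm₂ : 0 < m₂)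
    (ℰ : ℝ) (hℰpos : 0 < ℰ) (hℰlt : ℰ < κ 0 / 2)
    (T₁ T₂ : ℝ → ℝ → ℝ → ℝ)
    (hT₁0 : ∀ Q E, T₁ Q E 0 = Real.sqrt (2 * m₁ / E) * Q)
    (hT₂0 : ∀ Q E, T₂ Q E 0 = Real.sqrt (2 * m₂ / E) * (1 - Q))
    (hT₁ : ∀ Q E δ, 0 < δ → T₁ Q E δ =
      2 * ∫ s in (δ * κinv E)..(Q - δ * κinv E),
        Real.sqrt ((m₁ / 2) / (E - κ (s / δ) - κ ((Q - s) / δ))))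
    (hT₂ : ∀ Q E δ, 0 < δ → T₂ Q E δ =
      2 * ∫ s in (Q + δ * κinv E)..(1 - δ * κinv E),
        Real.sqrt ((m₂ / 2) / (E - κ ((s - Q) / δ) - κ ((1 - s) / δ)))) :
    ContDiffOn ℝ 1 (fun p : ℝ × ℝ × ℝ => T₁ p.1 p.2.1 p.2.2)
        (Set.Ioo ℰ (1 - ℰ) ×ˢ Set.Ioo ℰ (κ 0 - ℰ) ×ˢ Set.Ico 0 (ℰ / 2)) ∧
    ContDiffOn ℝ 1 (fun p : ℝ × ℝ × ℝ => T₂ p.1 p.2.1 p.2.2)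
        (Set.Ioo ℰ (1 - ℰ) ×ˢ Set.Ioo ℰ (κ 0 - ℰ) ×ˢ Set.Ico 0 (ℰ / 2)) ∧
    ∃ C : ℝ, ∀ Q ∈ Set.Ioo ℰ (1 - ℰ), ∀ E ∈ Set.Ioo ℰ (κ 0 - ℰ),
      ∀ δ ∈ Set.Ico (0:ℝ) (ℰ / 2),
        |T₁ Q E δ - Real.sqrt (2 * m₁ / E) * Q| ≤ C * δ ∧
        |T₂ Q E δ - Real.sqrt (2 * m₂ / E) * (1 - Q)| ≤ C * δ :=
  one_d_smooth_periods_general κ hκC2 hκ0 hκ'neg κinv hκinv_right hκinvC2 hκinv'neg m₁ m₂ hm₁ hm₂ ℰ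
    hℰpos T₁ T₂ hT₁0 hT₂0 hT₁ hT₂
end

section
/- Uniform bound on the normalized singular integral of (κ⁻¹)'' (claim in the proof of Lemma `1d_smooth_ode`): For every ℰ ∈ (0, κ(0)/2), the quantity sup over E₁ ∈ [ℰ, κ(0)−ℰ] of the sup over e ∈ (0, E₁] of | (1/(κ⁻¹)'(e)) · ∫_e^{E₁} (κ⁻¹)''(u)/√(E₁−u) du | is finite. -/
open Set Filter Topology MeasureTheory intervalIntegral

/-!
Write `A = (κ⁻¹)'` and split the integral at `ℰ/2`. On `[ℰ/2, E₁]` the function `A'` is bounded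
and `(E₁ - u)^(-1/2)` is integrable. On `[e, ℰ/2]` the weight `(E₁ - u)^(-1/2)` is smooth, so
integrating by parts moves the derivative onto it: the boundary terms are `O(1 + |A e|)`, and
because `A ≤ 0` the remaining integral is at most a constant times
`∫ |A| = κ⁻¹ e - κ⁻¹ (ℰ/2) ≤ 1`. So the integral is `O(1 + |A e|)`; dividing by `A e` gives a
bounded quantity because `A` is continuous, negative and tends to `-∞` at `0`, hence bounded away
from `0` on `(0, κ 0 - ℰ]`.
-/

lemma hasDerivAt_inv_sqrt_sub {E u : ℝ} (hu : u < E) :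
    HasDerivAt (fun x => (√(E - x))⁻¹) (2 * √(E - u) * (E - u))⁻¹ u := by
  have h0 : 0 < E - u := sub_pos.mpr hu
  have hsqrt := ((hasDerivAt_id u).const_sub E).sqrt h0.ne'
  refine (hsqrt.inv (Real.sqrt_pos.mpr h0).ne').congr_deriv ?_
  simp only [id_eq]
  field_simp
  rw [Real.sq_sqrt h0.le]

lemma eqOn_inv_sqrt_rpow {t : ℝ} (ht : 0 ≤ t) :
    EqOn (fun x : ℝ => (√x)⁻¹) (fun x => x ^ (-(1 / 2) : ℝ)) (uIcc 0 t) := by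
  intro x hx
  rw [uIcc_of_le ht] at hx
  simp only [Real.sqrt_eq_rpow, Real.rpow_neg hx.1]

lemma intervalIntegrable_inv_sqrt_sub {a E : ℝ} (h : a ≤ E) :
    IntervalIntegrable (fun u => (√(E - u))⁻¹) volume a E := by
  have h0 : IntervalIntegrable (fun x : ℝ => (√x)⁻¹) volume 0 (E - a) :=
    (intervalIntegrable_congr ((eqOn_inv_sqrt_rpow (sub_nonneg.mpr h)).mono
      uIoc_subset_uIcc)).mpr (intervalIntegrable_rpow' (by norm_num))
  simpa using (h0.comp_sub_left E).symm

lemma integral_inv_sqrt_sub {a E : ℝ} (h : a ≤ E) :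
    ∫ u in a..E, (√(E - u))⁻¹ = 2 * √(E - a) := by
  rw [integral_comp_sub_left (fun x => (√x)⁻¹), sub_self,
    integral_congr (eqOn_inv_sqrt_rpow (sub_nonneg.mpr h)),
    integral_rpow (Or.inl (by norm_num)), Real.zero_rpow (by norm_num), Real.sqrt_eq_rpow]
  norm_num
  ring

lemma norm_div_sqrt_le {x y L : ℝ} (h : |x| ≤ L) : ‖x / √y‖ ≤ L * (√y)⁻¹ := by
  rw [Real.norm_eq_abs, abs_div, abs_of_nonneg (Real.sqrt_nonneg y), div_eq_mul_inv]
  gcongr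

lemma intervalIntegrable_div_sqrt_sub {g : ℝ → ℝ} {a E L : ℝ} (hg : Measurable g) (h : a ≤ E)
    (hL : ∀ u ∈ Ioc a E, |g u| ≤ L) :
    IntervalIntegrable (fun u => g u / √(E - u)) volume a E := by
  refine ((intervalIntegrable_inv_sqrt_sub h).const_mul L).mono_fun'
    (hg.div (by fun_prop)).aestronglyMeasurable ?_
  rw [uIoc_of_le h]
  exact (ae_restrict_iff' measurableSet_Ioc).mpr
    (ae_of_all _ fun u hu => norm_div_sqrt_le (hL u hu))

lemma abs_integral_div_sqrt_sub_le {g : ℝ → ℝ} {a E L : ℝ} (h : a ≤ E)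
    (hL : ∀ u ∈ Ioc a E, |g u| ≤ L) :
    |∫ u in a..E, g u / √(E - u)| ≤ 2 * L * √(E - a) :=
  calc |∫ u in a..E, g u / √(E - u)| ≤ ∫ u in a..E, L * (√(E - u))⁻¹ :=
        norm_integral_le_of_norm_le h (ae_of_all _ fun u hu => norm_div_sqrt_le (hL u hu))
          ((intervalIntegrable_inv_sqrt_sub h).const_mul L)
    _ = 2 * L * √(E - a) := by
        rw [intervalIntegral.integral_const_mul, integral_inv_sqrt_sub h]
        ring

lemma integral_div_sqrt_sub_eq {f' f'' : ℝ → ℝ} {a b E : ℝ} (hab : a ≤ b) (hbE : b < E)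
    (hf' : ∀ u ∈ Icc a b, HasDerivAt f' (f'' u) u) (hf'' : IntervalIntegrable f'' volume a b) :
    ∫ u in a..b, f'' u / √(E - u) =
      f' b / √(E - b) - f' a / √(E - a) - ∫ u in a..b, (2 * √(E - u) * (E - u))⁻¹ * f' u := by
  have hlt : ∀ u ∈ Icc a b, 0 < E - u := fun u hu => by linarith [hu.2]
  have hw' : ContinuousOn (fun u => (2 * √(E - u) * (E - u))⁻¹) (Icc a b) :=
    ContinuousOn.inv₀ (by fun_prop) fun u hu =>
      (mul_pos (mul_pos two_pos (Real.sqrt_pos.mpr (hlt u hu))) (hlt u hu)).ne'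
  have hibp := integral_mul_deriv_eq_deriv_mul
    (fun u hu => hasDerivAt_inv_sqrt_sub (sub_pos.mp (hlt u ((uIcc_of_le hab) ▸ hu))))
    (fun u hu => hf' u ((uIcc_of_le hab) ▸ hu)) (hw'.intervalIntegrable_of_Icc hab) hf''
  simp only [div_eq_inv_mul]
  exact hibp

lemma abs_integral_mul_le_of_hasDerivAt_of_nonpos {f f' k : ℝ → ℝ} {a b K : ℝ} (hab : a ≤ b)
    (hf : ∀ u ∈ Icc a b, HasDerivAt f (f' u) u) (hf' : IntervalIntegrable f' volume a b)
    (hf'_nonpos : ∀ u ∈ Icc a b, f' u ≤ 0) (hk : ∀ u ∈ Icc a b, 0 ≤ k u ∧ k u ≤ K) :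
    |∫ u in a..b, k u * f' u| ≤ K * (f a - f b) := by
  have hbound : ∀ u ∈ Icc a b, ‖k u * f' u‖ ≤ K * -f' u := fun u hu => by
    rw [Real.norm_eq_abs, abs_mul, abs_of_nonneg (hk u hu).1, abs_of_nonpos (hf'_nonpos u hu)]
    exact mul_le_mul_of_nonneg_right (hk u hu).2 (neg_nonneg.mpr (hf'_nonpos u hu))
  calc |∫ u in a..b, k u * f' u| ≤ ∫ u in a..b, K * -f' u :=
        norm_integral_le_of_norm_le hab
          (ae_of_all _ fun u hu => hbound u (Ioc_subset_Icc_self hu)) (hf'.neg.const_mul K)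
    _ = K * (f a - f b) := by
        rw [intervalIntegral.integral_const_mul, intervalIntegral.integral_neg,
          integral_eq_sub_of_hasDerivAt (fun u hu => hf u ((uIcc_of_le hab) ▸ hu)) hf', neg_sub]

lemma abs_integral_div_sqrt_sub_le_of_deriv_nonpos {f f' f'' : ℝ → ℝ} {a b E δ : ℝ}
    (hab : a ≤ b) (hδ : 0 < δ) (hδE : δ ≤ E - b)
    (hf : ∀ u ∈ Icc a b, HasDerivAt f (f' u) u) (hf' : ∀ u ∈ Icc a b, HasDerivAt f' (f'' u) u)
    (hf'' : ContinuousOn f'' (Icc a b)) (hf'_nonpos : ∀ u ∈ Icc a b, f' u ≤ 0) :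
    |∫ u in a..b, f'' u / √(E - u)| ≤ (|f' a| + |f' b|) / √δ + (f a - f b) / (2 * √δ * δ) := by
  have hδu : ∀ u ∈ Icc a b, δ ≤ E - u := fun u hu => by linarith [hu.2]
  have hend : ∀ u ∈ Icc a b, |f' u / √(E - u)| ≤ |f' u| / √δ := fun u hu => by
    rw [abs_div, abs_of_nonneg (Real.sqrt_nonneg _)]
    gcongr
    exact hδu u hu
  have hrem := abs_integral_mul_le_of_hasDerivAt_of_nonpos hab hf
    (ContinuousOn.intervalIntegrable_of_Icc hab fun u hu =>
      (hf' u hu).continuousAt.continuousWithinAt)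
    hf'_nonpos (k := fun u => (2 * √(E - u) * (E - u))⁻¹) (K := (2 * √δ * δ)⁻¹) fun u hu => by
      have := hδu u hu
      refine ⟨inv_nonneg.mpr (mul_nonneg (by positivity) (hδ.le.trans this)), ?_⟩
      gcongr
  rw [integral_div_sqrt_sub_eq hab (by linarith) hf' (hf''.intervalIntegrable_of_Icc hab)]
  calc _ ≤ |f' b / √(E - b)| + |f' a / √(E - a)|
          + |∫ u in a..b, (2 * √(E - u) * (E - u))⁻¹ * f' u| :=
        (abs_sub _ _).trans (add_le_add_left (abs_sub _ _) _)
    _ ≤ |f' b| / √δ + |f' a| / √δ + (2 * √δ * δ)⁻¹ * (f a - f b) := by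
        gcongr
        exacts [hend b (right_mem_Icc.mpr hab), hend a (left_mem_Icc.mpr hab)]
    _ = _ := by ring

lemma exists_forall_le_neg_of_tendsto_atBot {g : ℝ → ℝ} {c : ℝ} (hg : ContinuousOn g (Ioc 0 c))
    (hneg : ∀ x ∈ Ioc 0 c, g x < 0) (hlim : Tendsto g (𝓝[>] 0) atBot) :
    ∃ m > 0, ∀ x ∈ Ioc 0 c, g x ≤ -m := by
  obtain ⟨ε, hε, hεg⟩ := mem_nhdsGT_iff_exists_Ioo_subset.mp
    (hlim.eventually (eventually_le_atBot (-1)))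
  obtain ⟨m, hm, hmg⟩ : ∃ m > 0, ∀ x ∈ Icc ε c, g x ≤ -m := by
    rcases (Icc ε c).eq_empty_or_nonempty with h | h
    · exact ⟨1, one_pos, by simp [h]⟩
    · obtain ⟨u, hu, hmax⟩ := isCompact_Icc.exists_isMaxOn h
        (hg.mono fun x hx => ⟨hε.trans_le hx.1, hx.2⟩)
      exact ⟨-g u, neg_pos.mpr (hneg u ⟨hε.trans_le hu.1, hu.2⟩), fun x hx => by
        simpa using hmax hx⟩
  refine ⟨min 1 m, lt_min one_pos hm, fun x hx => ?_⟩
  rcases lt_or_ge x ε with h | h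
  · linarith [show g x ≤ -1 from hεg ⟨hx.1, h⟩, min_le_left 1 m]
  · linarith [hmg x ⟨h, hx.2⟩, min_le_right 1 m]

lemma abs_one_div_mul_le {x y C d m : ℝ} (hm : 0 < m) (hy : m ≤ |y|) (hx : |x| ≤ C + |y| / d) :
    |1 / y * x| ≤ |C| / m + 1 / d := by
  have hy0 : 0 < |y| := hm.trans_le hy
  calc |1 / y * x| = |x| / |y| := by rw [abs_mul, abs_one_div, one_div_mul_eq_div]
    _ ≤ (C + |y| / d) / |y| := by gcongr
    _ = C / |y| + 1 / d := by rw [add_div, div_right_comm, div_self hy0.ne']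
    _ ≤ |C| / m + 1 / d := add_le_add ((div_le_div_of_nonneg_right (le_abs_self C)
        hy0.le).trans (div_le_div_of_nonneg_left (abs_nonneg C) hm hy)) le_rfl

theorem exists_abs_integral_deriv_deriv_div_sqrt_sub_le {f : ℝ → ℝ} {c B ℰ : ℝ}
    (hf : ContDiffOn ℝ 2 f (Ioo 0 c)) (hf'_nonpos : ∀ y ∈ Ioo 0 c, deriv f y ≤ 0)
    (hB : ∀ y ∈ Ioo 0 c, f y ≤ B) (hℰ : 0 < ℰ) (hℰc : ℰ < c / 2) :
    ∃ C₀, ∀ E ∈ Icc ℰ (c - ℰ), ∀ e ∈ Ioc 0 E,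
      |∫ u in e..E, deriv (deriv f) u / √(E - u)| ≤ C₀ + |deriv f e| / √(ℰ / 2) := by
  set δ := ℰ / 2 with hδ
  have hK : Icc δ (c - ℰ) ⊆ Ioo 0 c := fun u hu => ⟨by linarith [hu.1], by linarith [hu.2]⟩
  have hδK : δ ∈ Icc δ (c - ℰ) := ⟨le_rfl, by linarith⟩
  have hf' : ContDiffOn ℝ 1 (deriv f) (Ioo 0 c) := hf.deriv_of_isOpen isOpen_Ioo (by norm_num)
  have hd : ∀ u ∈ Ioo 0 c, HasDerivAt f (deriv f u) u := fun u hu =>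
    (hf.differentiableOn (by norm_num)).hasDerivAt (isOpen_Ioo.mem_nhds hu)
  have hd' : ∀ u ∈ Ioo 0 c, HasDerivAt (deriv f) (deriv (deriv f) u) u := fun u hu =>
    (hf'.differentiableOn one_ne_zero).hasDerivAt (isOpen_Ioo.mem_nhds hu)
  have hf''c : ContinuousOn (deriv (deriv f)) (Ioo 0 c) :=
    hf'.continuousOn_deriv_of_isOpen isOpen_Ioo le_rfl
  obtain ⟨L, hL⟩ := isCompact_Icc.exists_bound_of_continuousOn (hf''c.mono hK)
  obtain ⟨M, hM⟩ := isCompact_Icc.exists_bound_of_continuousOn (hf'.continuousOn.mono hK)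
  have hM0 : 0 ≤ M := (norm_nonneg _).trans (hM δ hδK)
  have hL0 : 0 ≤ L := (norm_nonneg _).trans (hL δ hδK)
  have hBδ : 0 ≤ B - f δ := sub_nonneg.mpr (hB δ (hK hδK))
  refine ⟨2 * L * √c + M / √δ + (B - f δ) / (2 * √δ * δ), fun E hE e he => ?_⟩
  have hLE : ∀ a ∈ Icc δ E, ∀ u ∈ Ioc a E, |deriv (deriv f) u| ≤ L := fun a ha u hu =>
    hL u ⟨ha.1.trans hu.1.le, hu.2.trans hE.2⟩
  have hfar : ∀ a ∈ Icc δ E, |∫ u in a..E, deriv (deriv f) u / √(E - u)| ≤ 2 * L * √c :=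
    fun a ha => (abs_integral_div_sqrt_sub_le ha.2 (hLE a ha)).trans
      (by gcongr; linarith [ha.1, hE.2])
  rcases le_or_gt δ e with hδe | heδ
  · have := hfar e ⟨hδe, he.2⟩
    have : 0 ≤ M / √δ + (B - f δ) / (2 * √δ * δ) + |deriv f e| / √δ := by positivity
    linarith
  have hnear : Icc e δ ⊆ Ioo 0 c := fun u hu => ⟨he.1.trans_le hu.1, by linarith [hu.2]⟩
  have hδE : δ ∈ Icc δ E := ⟨le_rfl, by linarith [hE.1]⟩
  have hint_near : IntervalIntegrable (fun u => deriv (deriv f) u / √(E - u)) volume e δ :=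
    ((hf''c.mono hnear).div (by fun_prop) fun u hu =>
      (Real.sqrt_pos.mpr (by linarith [hu.2, hE.1])).ne').intervalIntegrable_of_Icc heδ.le
  have hint_far := intervalIntegrable_div_sqrt_sub (measurable_deriv _) hδE.2 (hLE δ hδE)
  have hnear_le := abs_integral_div_sqrt_sub_le_of_deriv_nonpos heδ.le (E := E) (half_pos hℰ)
    (by linarith [hE.1]) (fun u hu => hd u (hnear hu)) (fun u hu => hd' u (hnear hu))
    (hf''c.mono hnear) (fun u hu => hf'_nonpos u (hnear hu))
  have hfe : f e ≤ B := hB e (hnear (left_mem_Icc.mpr heδ.le))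
  have hf'δ : |deriv f δ| ≤ M := hM δ hδK
  rw [← integral_add_adjacent_intervals hint_near hint_far]
  calc _ ≤ _ := abs_add_le _ _
    _ ≤ (|deriv f e| + |deriv f δ|) / √δ + (f e - f δ) / (2 * √δ * δ) + 2 * L * √c :=
        add_le_add hnear_le (hfar δ hδE)
    _ ≤ (|deriv f e| + M) / √δ + (B - f δ) / (2 * √δ * δ) + 2 * L * √c := by gcongr
    _ = _ := by ring

theorem kappa_inv_second_deriv_bound_general
    (κ : ℝ → ℝ)
    (κinv : ℝ → ℝ)
    (hκinv_right : ∀ y ∈ Set.Icc 0 (κ 0), κ (κinv y) = y ∧ κinv y ∈ Set.Icc (0:ℝ) 1)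
    (hκinvC2 : ContDiffOn ℝ 2 κinv (Set.Ioc 0 (κ 0)))
    (hκinv'neg : ∀ y ∈ Set.Ioc 0 (κ 0), deriv κinv y < 0)
    (hκinv'atbot : Filter.Tendsto (deriv κinv) (nhdsWithin 0 (Set.Ioi 0)) Filter.atBot)
    (ℰ : ℝ) (hℰpos : 0 < ℰ) (hℰlt : ℰ < κ 0 / 2) :
    ∃ C : ℝ, ∀ E₁ ∈ Set.Icc ℰ (κ 0 - ℰ), ∀ e ∈ Set.Ioc (0:ℝ) E₁,
      |(1 / deriv κinv e) *
        ∫ u in e..E₁, deriv (deriv κinv) u / Real.sqrt (E₁ - u)| ≤ C := by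
  have hC2 : ContDiffOn ℝ 2 κinv (Ioo 0 (κ 0)) := hκinvC2.mono Ioo_subset_Ioc_self
  obtain ⟨m, hm, hκinv'_le⟩ := exists_forall_le_neg_of_tendsto_atBot
    ((hC2.continuousOn_deriv_of_isOpen isOpen_Ioo (by norm_num)).mono
      (Ioc_subset_Ioo_right (show κ 0 - ℰ < κ 0 by linarith)))
    (fun y hy => hκinv'neg y ⟨hy.1, by linarith [hy.2]⟩) hκinv'atbot
  obtain ⟨C₀, hC₀⟩ := exists_abs_integral_deriv_deriv_div_sqrt_sub_le hC2
    (fun y hy => (hκinv'neg y (Ioo_subset_Ioc_self hy)).le)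
    (fun y hy => (hκinv_right y (Ioo_subset_Icc_self hy)).2.2) hℰpos hℰlt
  refine ⟨|C₀| / m + 1 / √(ℰ / 2), fun E₁ hE₁ e he => abs_one_div_mul_le hm ?_ (hC₀ E₁ hE₁ e he)⟩
  exact le_abs.mpr (Or.inr (by linarith [hκinv'_le e ⟨he.1, he.2.trans hE₁.2⟩]))

/-- **Uniform bound on the normalized singular integral of `(κ⁻¹)''`.**
The quantity `(1/(κ⁻¹)'(e)) · ∫_e^{E₁} (κ⁻¹)''(u)/√(E₁−u) du` is bounded uniformly over
`E₁ ∈ [ℰ, κ(0)−ℰ]` and `e ∈ (0, E₁]`. -/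
theorem kappa_inv_second_deriv_bound
    (κ : ℝ → ℝ) (hκC2 : ContDiff ℝ 2 κ)
    (hκ0 : ∀ x : ℝ, 1 ≤ x → κ x = 0) (hκ'neg : ∀ x : ℝ, x < 1 → deriv κ x < 0)
    (κinv : ℝ → ℝ)
    (hκinv_left : ∀ x ∈ Set.Icc (0:ℝ) 1, κinv (κ x) = x)
    (hκinv_right : ∀ y ∈ Set.Icc 0 (κ 0), κ (κinv y) = y ∧ κinv y ∈ Set.Icc (0:ℝ) 1)
    (hκinvC2 : ContDiffOn ℝ 2 κinv (Set.Ioc 0 (κ 0)))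
    (hκinv'neg : ∀ y ∈ Set.Ioc 0 (κ 0), deriv κinv y < 0)
    (hκinv'atbot : Filter.Tendsto (deriv κinv) (nhdsWithin 0 (Set.Ioi 0)) Filter.atBot)
    (ℰ : ℝ) (hℰpos : 0 < ℰ) (hℰlt : ℰ < κ 0 / 2) :
    ∃ C : ℝ, ∀ E₁ ∈ Set.Icc ℰ (κ 0 - ℰ), ∀ e ∈ Set.Ioc (0:ℝ) E₁,
      |(1 / deriv κinv e) *
        ∫ u in e..E₁, deriv (deriv κinv) u / Real.sqrt (E₁ - u)| ≤ C :=
  kappa_inv_second_deriv_bound_general κ κinv hκinv_right hκinvC2 hκinv'neg hκinv'atbot ℰ hℰpos hℰlt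
end

section
/- Integral bound on the interaction forces along soft-core orbits (Lemma `1d_smooth_intbound`): Consider the soft-core piston system with one gas particle on each side (n₁ = n₂ = 1). There exist δ₀ > 0, ε₀ > 0, and C > 0 (depending only on κ, m₁, m₂, and 𝒱) such that: for every δ ∈ (0, δ₀], every ε ∈ (0, ε₀], every solution (Q, W, q₁, v₁, q₂, v₂) of the soft-core ODE, and all times 𝒯' ≤ 𝒯 such that the slow variables h(s) = (Q(s), W(s), E₁(s), E₂(s)) lie in 𝒱 for all s ∈ [𝒯', 𝒯], one has ∫_{𝒯'}^{𝒯} ( |κ_δ'(Q(s) − q₁(s))| + |κ_δ'(q₂(s) − Q(s))| ) ds ≤ C·max(1, 𝒯 − 𝒯'). -/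
/-!
Each gas particle moves between two walls, a container end and the piston, whose speeds are
`O(ε)`, and its energy, being below the barrier height `κ 0`, bounds its speed. Differentiating
the virial `m v (q - (ℓ + r) / 2)` along the motion gives the wall forces times the offset of the
particle from the midpoint of the walls, plus bounded terms. A wall force acts only within `δ` of
its wall, where that offset is at least `c / 2 - δ` (with `c` the minimal wall distance) and has
the sign opposite to the force, so the force term is at most `-(c / 2 - δ)` times the total force.
Integrating, the total force is `O(1 + (T - T'))`.
-/

open Set MeasureTheory

theorem deriv_eq_zero_of_forall_ge_eq_zero {f : ℝ → ℝ} {a x : ℝ} (hf : DifferentiableAt ℝ f x)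
    (h0 : ∀ y, a ≤ y → f y = 0) (hx : a ≤ x) : deriv f x = 0 :=
  (uniqueDiffWithinAt_Ici x).eq_deriv _ hf.hasDerivAt.hasDerivWithinAt
    ((hasDerivWithinAt_const x _ 0).congr (fun y hy => h0 y (hx.trans hy)) (h0 x hx))

theorem integral_le_of_le_sub_deriv {f g g' : ℝ → ℝ} {a b K G : ℝ} (hab : a ≤ b)
    (hf : IntervalIntegrable f volume a b) (hg : ∀ s ∈ Icc a b, HasDerivAt g (g' s) s)
    (hgG : ∀ s ∈ Icc a b, |g s| ≤ G) (hfg : ∀ s ∈ Icc a b, f s ≤ K - g' s) :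
    ∫ s in a..b, f s ≤ K * (b - a) + 2 * G := by
  have hφ : ∀ s ∈ Icc a b, HasDerivAt (fun t => K * t - g t) (K - g' s) s := fun s hs => by
    simpa using ((hasDerivAt_id s).const_mul K).fun_sub (hg s hs)
  have hΔφ := intervalIntegral.integral_le_sub_of_hasDeriv_right_of_le hab
    (HasDerivAt.continuousOn hφ) (fun s hs => (hφ s (Ioo_subset_Icc_self hs)).hasDerivWithinAt)
    ((intervalIntegrable_iff_integrableOn_Icc_of_le hab).1 hf)
    (fun s hs => hfg s (Ioo_subset_Icc_self hs))
  have hga := abs_le.1 (hgG a ⟨le_rfl, hab⟩)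
  have hgb := abs_le.1 (hgG b ⟨hab, le_rfl⟩)
  linarith

structure IsSoftCorePotential (κ : ℝ → ℝ) : Prop where
  differentiable : Differentiable ℝ κ
  continuous_deriv : Continuous (deriv κ)
  eq_zero_of_one_le : ∀ x, 1 ≤ x → κ x = 0
  deriv_nonpos : ∀ x, deriv κ x ≤ 0

namespace IsSoftCorePotential

variable {κ : ℝ → ℝ}

theorem of_contDiff (hκ : ContDiff ℝ 2 κ) (h0 : ∀ x, 1 ≤ x → κ x = 0)
    (hneg : ∀ x, x < 1 → deriv κ x < 0) : IsSoftCorePotential κ where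
  differentiable := hκ.differentiable (by norm_num)
  continuous_deriv := hκ.continuous_deriv (by norm_num)
  eq_zero_of_one_le := h0
  deriv_nonpos x := (lt_or_ge x 1).elim (fun hx => (hneg x hx).le) fun hx =>
    (deriv_eq_zero_of_forall_ge_eq_zero (hκ.differentiable (by norm_num) x) h0 hx).le

theorem deriv_eq_zero_of_one_le (hκ : IsSoftCorePotential κ) {x : ℝ} (hx : 1 ≤ x) :
    deriv κ x = 0 :=
  deriv_eq_zero_of_forall_ge_eq_zero (hκ.differentiable x) hκ.eq_zero_of_one_le hx

theorem antitone (hκ : IsSoftCorePotential κ) : Antitone κ :=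
  antitone_of_deriv_nonpos hκ.differentiable hκ.deriv_nonpos

theorem nonneg (hκ : IsSoftCorePotential κ) (x : ℝ) : 0 ≤ κ x :=
  (hκ.eq_zero_of_one_le _ (le_max_right x 1)).symm.le.trans (hκ.antitone (le_max_left x 1))

theorem abs_deriv_div (hκ : IsSoftCorePotential κ) {δ : ℝ} (hδ : 0 ≤ δ) (y : ℝ) :
    |deriv κ y / δ| = -(deriv κ y / δ) :=
  abs_of_nonpos (div_nonpos_of_nonpos_of_nonneg (hκ.deriv_nonpos y) hδ)

theorem abs_deriv_div_mul_le (hκ : IsSoftCorePotential κ) {δ y t u : ℝ} (hδ : 0 < δ)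
    (h : y < δ → t ≤ u) : |deriv κ (y / δ) / δ| * t ≤ |deriv κ (y / δ) / δ| * u := by
  rcases lt_or_ge y δ with hy | hy
  · exact mul_le_mul_of_nonneg_left (h hy) (abs_nonneg _)
  · simp [hκ.deriv_eq_zero_of_one_le ((one_le_div hδ).2 hy)]

theorem intervalIntegrable_abs_deriv_div (hκ : IsSoftCorePotential κ) {y : ℝ → ℝ}
    {a b δ : ℝ} (hab : a ≤ b) (hy : ContinuousOn y (Icc a b)) :
    IntervalIntegrable (fun s => |deriv κ (y s / δ) / δ|) volume a b :=
  ((hκ.continuous_deriv.comp_continuousOn (hy.div_const δ)).div_const δ).abs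
    |>.intervalIntegrable_of_Icc hab

theorem pos_of_energy_lt (hκ : IsSoftCorePotential κ) {m v y z δ : ℝ} (hm : 0 < m)
    (hδ : 0 < δ) (hE : m * v ^ 2 / 2 + κ (y / δ) + κ (z / δ) < κ 0) :
    0 < y ∧ 0 < z ∧ |v| ≤ √(2 * κ 0 / m) := by
  have hy := hκ.nonneg (y / δ)
  have hz := hκ.nonneg (z / δ)
  have hkin : 0 ≤ m * v ^ 2 / 2 := by positivity
  refine ⟨(div_pos_iff_of_pos_right hδ).1 (hκ.antitone.reflect_lt (by linarith)),
    (div_pos_iff_of_pos_right hδ).1 (hκ.antitone.reflect_lt (by linarith)),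
    Real.abs_le_sqrt ?_⟩
  rw [le_div_iff₀ hm]
  linarith

end IsSoftCorePotential

section Particle

variable {κ : ℝ → ℝ} {m c D R V δ T' T : ℝ} {q v ℓ r ℓ' r' : ℝ → ℝ}

theorem particle_integral_le (hκ : IsSoftCorePotential κ) (hm : 0 < m) (hδ : 0 < δ)
    (hT : T' ≤ T) (hq : ∀ s ∈ Icc T' T, HasDerivAt q (v s) s)
    (hv : ∀ s ∈ Icc T' T, HasDerivAt v
      ((-(deriv κ ((q s - ℓ s) / δ) / δ) + deriv κ ((r s - q s) / δ) / δ) / m) s)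
    (hℓ : ∀ s ∈ Icc T' T, HasDerivAt ℓ (ℓ' s) s) (hr : ∀ s ∈ Icc T' T, HasDerivAt r (r' s) s)
    (hℓR : ∀ s ∈ Icc T' T, |ℓ' s| ≤ R) (hrR : ∀ s ∈ Icc T' T, |r' s| ≤ R)
    (hℓq : ∀ s ∈ Icc T' T, ℓ s ≤ q s) (hqr : ∀ s ∈ Icc T' T, q s ≤ r s)
    (hc : ∀ s ∈ Icc T' T, c ≤ r s - ℓ s) (hD : ∀ s ∈ Icc T' T, r s - ℓ s ≤ D)
    (hV : ∀ s ∈ Icc T' T, |v s| ≤ V) :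
    (c / 2 - δ) * ∫ s in T'..T,
        (|deriv κ ((q s - ℓ s) / δ) / δ| + |deriv κ ((r s - q s) / δ) / δ|)
      ≤ m * V * ((V + R) * (T - T') + D) := by
  set Fℓ : ℝ → ℝ := fun s => |deriv κ ((q s - ℓ s) / δ) / δ|
  set Fr : ℝ → ℝ := fun s => |deriv κ ((r s - q s) / δ) / δ|
  set x : ℝ → ℝ := fun s => q s - (ℓ s + r s) / 2
  have hqc := HasDerivAt.continuousOn hq
  have hint : IntervalIntegrable (fun s => Fℓ s + Fr s) volume T' T :=
    (hκ.intervalIntegrable_abs_deriv_div hT (hqc.sub (HasDerivAt.continuousOn hℓ))).add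
      (hκ.intervalIntegrable_abs_deriv_div hT ((HasDerivAt.continuousOn hr).sub hqc))
  rw [← intervalIntegral.integral_const_mul]
  refine (integral_le_of_le_sub_deriv hT (hint.const_mul _) (g := fun s => m * v s * x s)
    (g' := fun s => (Fℓ s - Fr s) * x s + m * v s * (v s - (ℓ' s + r' s) / 2))
    (K := m * V * (V + R)) (G := m * V * (D / 2)) ?_ ?_ ?_).trans_eq (by ring)
  · intro s hs
    refine (((hv s hs).const_mul m).fun_mul
      ((hq s hs).fun_sub (((hℓ s hs).fun_add (hr s hs)).div_const 2))).congr_deriv ?_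
    simp only [Fℓ, Fr, x, hκ.abs_deriv_div hδ.le]
    field_simp
    ring
  · intro s hs
    have hx : |x s| ≤ D / 2 := abs_le.2 ⟨by simp only [x]; linarith [hℓq s hs, hD s hs],
      by simp only [x]; linarith [hqr s hs, hD s hs]⟩
    have hV₀ : 0 ≤ V := (abs_nonneg _).trans (hV s hs)
    rw [abs_mul, abs_mul, abs_of_pos hm]
    gcongr
    exact hV s hs
  · intro s hs
    have hℓside : Fℓ s * (c / 2 - δ) ≤ Fℓ s * -x s :=
      hκ.abs_deriv_div_mul_le hδ fun h => by simp only [x]; linarith [hc s hs]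
    have hrside : Fr s * (c / 2 - δ) ≤ Fr s * x s :=
      hκ.abs_deriv_div_mul_le hδ fun h => by simp only [x]; linarith [hc s hs]
    have hwall : |(ℓ' s + r' s) / 2| ≤ R := by
      rw [abs_div, abs_two]
      linarith [abs_add_le (ℓ' s) (r' s), hℓR s hs, hrR s hs]
    have hkin : m * v s * (v s - (ℓ' s + r' s) / 2) ≤ m * V * (V + R) :=
      calc m * v s * (v s - (ℓ' s + r' s) / 2)
          ≤ m * |v s| * |v s - (ℓ' s + r' s) / 2| := by
            rw [mul_assoc, mul_assoc, ← abs_mul]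
            exact mul_le_mul_of_nonneg_left (le_abs_self _) hm.le
        _ ≤ m * V * (V + R) := by
            have hV₀ : 0 ≤ V := (abs_nonneg _).trans (hV s hs)
            gcongr
            · exact hV s hs
            · linarith [abs_sub (v s) ((ℓ' s + r' s) / 2), hV s hs]
    linarith

theorem particle_integral_le_max (hκ : IsSoftCorePotential κ) (hm : 0 < m) (hc₀ : 0 < c)
    (hδ : 0 < δ) (hδc : δ ≤ c / 4) (hT : T' ≤ T) (hq : ∀ s ∈ Icc T' T, HasDerivAt q (v s) s)
    (hv : ∀ s ∈ Icc T' T, HasDerivAt v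
      ((-(deriv κ ((q s - ℓ s) / δ) / δ) + deriv κ ((r s - q s) / δ) / δ) / m) s)
    (hℓ : ∀ s ∈ Icc T' T, HasDerivAt ℓ (ℓ' s) s) (hr : ∀ s ∈ Icc T' T, HasDerivAt r (r' s) s)
    (hℓR : ∀ s ∈ Icc T' T, |ℓ' s| ≤ R) (hrR : ∀ s ∈ Icc T' T, |r' s| ≤ R)
    (hℓq : ∀ s ∈ Icc T' T, ℓ s ≤ q s) (hqr : ∀ s ∈ Icc T' T, q s ≤ r s)
    (hc : ∀ s ∈ Icc T' T, c ≤ r s - ℓ s) (hD : ∀ s ∈ Icc T' T, r s - ℓ s ≤ D)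
    (hV : ∀ s ∈ Icc T' T, |v s| ≤ V) :
    ∫ s in T'..T, (|deriv κ ((q s - ℓ s) / δ) / δ| + |deriv κ ((r s - q s) / δ) / δ|)
      ≤ 4 / c * (m * V * (V + R + D)) * max 1 (T - T') := by
  have hT' : T' ∈ Icc T' T := ⟨le_rfl, hT⟩
  have hV₀ : 0 ≤ V := (abs_nonneg _).trans (hV T' hT')
  have hR₀ : 0 ≤ R := (abs_nonneg _).trans (hℓR T' hT')
  have hD₀ : 0 ≤ D := hc₀.le.trans ((hc T' hT').trans (hD T' hT'))
  have hvirial := particle_integral_le hκ hm hδ hT hq hv hℓ hr hℓR hrR hℓq hqr hc hD hV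
  set I := ∫ s in T'..T, (|deriv κ ((q s - ℓ s) / δ) / δ| + |deriv κ ((r s - q s) / δ) / δ|)
  have hI₀ : 0 ≤ I := intervalIntegral.integral_nonneg hT fun s _ => by positivity
  have hmax : (V + R) * (T - T') + D ≤ (V + R + D) * max 1 (T - T') := by
    nlinarith [le_max_left 1 (T - T'), le_max_right 1 (T - T')]
  calc I = 4 / c * (c / 4 * I) := by field_simp
    _ ≤ 4 / c * (m * V * ((V + R) * (T - T') + D)) :=
        mul_le_mul_of_nonneg_left (by nlinarith) (by positivity)
    _ ≤ 4 / c * (m * V * (V + R + D)) * max 1 (T - T') := by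
        rw [mul_assoc (4 / c), mul_assoc (m * V)]; gcongr

end Particle

def SoftPistonODEAt (κ : ℝ → ℝ) (m₁ m₂ δ ε : ℝ) (Q W q₁ v₁ q₂ v₂ : ℝ → ℝ) (s : ℝ) : Prop :=
  HasDerivAt Q (ε * W s) s ∧
  HasDerivAt W (ε * (-(deriv κ ((Q s - q₁ s) / δ) / δ) + deriv κ ((q₂ s - Q s) / δ) / δ)) s ∧
  HasDerivAt q₁ (v₁ s) s ∧
  HasDerivAt v₁ ((-(deriv κ (q₁ s / δ) / δ) + deriv κ ((Q s - q₁ s) / δ) / δ) / m₁) s ∧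
  HasDerivAt q₂ (v₂ s) s ∧
  HasDerivAt v₂ ((-(deriv κ ((q₂ s - Q s) / δ) / δ) + deriv κ ((1 - q₂ s) / δ) / δ) / m₂) s

theorem soft_piston_integral_le {κ : ℝ → ℝ} (hκ : IsSoftCorePotential κ)
    {m₁ m₂ c R δ ε T' T : ℝ} {Q W q₁ v₁ q₂ v₂ : ℝ → ℝ} (hm₁ : 0 < m₁) (hm₂ : 0 < m₂)
    (hc : 0 < c) (hδ : 0 < δ) (hδc : δ ≤ c / 4) (hT : T' ≤ T)
    (hode : ∀ s ∈ Icc T' T, SoftPistonODEAt κ m₁ m₂ δ ε Q W q₁ v₁ q₂ v₂ s)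
    (hQ : ∀ s ∈ Icc T' T, c ≤ Q s ∧ Q s ≤ 1 - c) (hW : ∀ s ∈ Icc T' T, |ε * W s| ≤ R)
    (hE₁ : ∀ s ∈ Icc T' T, m₁ * v₁ s ^ 2 / 2 + κ (q₁ s / δ) + κ ((Q s - q₁ s) / δ) < κ 0)
    (hE₂ : ∀ s ∈ Icc T' T, m₂ * v₂ s ^ 2 / 2 + κ ((q₂ s - Q s) / δ) + κ ((1 - q₂ s) / δ) < κ 0) :
    ∫ s in T'..T, (|deriv κ ((Q s - q₁ s) / δ) / δ| + |deriv κ ((q₂ s - Q s) / δ) / δ|)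
      ≤ 4 / c * (m₁ * √(2 * κ 0 / m₁) * (√(2 * κ 0 / m₁) + R + 1)
        + m₂ * √(2 * κ 0 / m₂) * (√(2 * κ 0 / m₂) + R + 1)) * max 1 (T - T') := by
  have hR₀ : 0 ≤ R := (abs_nonneg _).trans (hW T' ⟨le_rfl, hT⟩)
  have h₁ := fun s hs => hκ.pos_of_energy_lt hm₁ hδ (hE₁ s hs)
  have h₂ := fun s hs => hκ.pos_of_energy_lt hm₂ hδ (hE₂ s hs)
  have hP₁ := particle_integral_le_max hκ hm₁ hc hδ hδc hT (ℓ := fun _ => 0) (ℓ' := fun _ => 0)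
    (D := 1) (fun s hs => (hode s hs).2.2.1)
    (fun s hs => by simpa only [sub_zero] using (hode s hs).2.2.2.1)
    (fun s _ => hasDerivAt_const s 0) (fun s hs => (hode s hs).1) (fun _ _ => by simpa using hR₀)
    hW (fun s hs => (h₁ s hs).1.le) (fun s hs => by linarith [(h₁ s hs).2.1])
    (fun s hs => by linarith [hQ s hs]) (fun s hs => by linarith [hQ s hs])
    (fun s hs => (h₁ s hs).2.2)
  have hP₂ := particle_integral_le_max hκ hm₂ hc hδ hδc hT (r := fun _ => 1) (r' := fun _ => 0)
    (D := 1) (fun s hs => (hode s hs).2.2.2.2.1) (fun s hs => (hode s hs).2.2.2.2.2)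
    (fun s hs => (hode s hs).1) (fun s _ => hasDerivAt_const s 1) hW
    (fun _ _ => by simpa using hR₀) (fun s hs => by linarith [(h₂ s hs).1])
    (fun s hs => by linarith [(h₂ s hs).2.1]) (fun s hs => by linarith [hQ s hs])
    (fun s hs => by linarith [hQ s hs]) (fun s hs => (h₂ s hs).2.2)
  have hQc := HasDerivAt.continuousOn fun s hs => (hode s hs).1
  have hq₁c := HasDerivAt.continuousOn fun s hs => (hode s hs).2.2.1
  have hq₂c := HasDerivAt.continuousOn fun s hs => (hode s hs).2.2.2.2.1
  have i₀ : IntervalIntegrable (fun s => |deriv κ ((q₁ s - 0) / δ) / δ|) volume T' T :=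
    hκ.intervalIntegrable_abs_deriv_div hT (hq₁c.sub continuousOn_const)
  have i₁ : IntervalIntegrable (fun s => |deriv κ ((Q s - q₁ s) / δ) / δ|) volume T' T :=
    hκ.intervalIntegrable_abs_deriv_div hT (hQc.sub hq₁c)
  have i₂ : IntervalIntegrable (fun s => |deriv κ ((q₂ s - Q s) / δ) / δ|) volume T' T :=
    hκ.intervalIntegrable_abs_deriv_div hT (hq₂c.sub hQc)
  have i₃ : IntervalIntegrable (fun s => |deriv κ ((1 - q₂ s) / δ) / δ|) volume T' T :=
    hκ.intervalIntegrable_abs_deriv_div hT (continuousOn_const.sub hq₂c)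
  calc _ ≤ ∫ s in T'..T, ((|deriv κ ((q₁ s - 0) / δ) / δ| + |deriv κ ((Q s - q₁ s) / δ) / δ|)
        + (|deriv κ ((q₂ s - Q s) / δ) / δ| + |deriv κ ((1 - q₂ s) / δ) / δ|)) :=
        intervalIntegral.integral_mono_on hT (i₁.add i₂) ((i₀.add i₁).add (i₂.add i₃))
          fun s _ => by
            linarith [abs_nonneg (deriv κ ((q₁ s - 0) / δ) / δ),
              abs_nonneg (deriv κ ((1 - q₂ s) / δ) / δ)]
    _ = _ := intervalIntegral.integral_add (i₀.add i₁) (i₂.add i₃)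
    _ ≤ _ := add_le_add hP₁ hP₂
    _ = _ := by ring

theorem one_d_smooth_intbound_general
    (κ : ℝ → ℝ) (hκC2 : ContDiff ℝ 2 κ)
    (hκ0 : ∀ x : ℝ, 1 ≤ x → κ x = 0) (hκ'neg : ∀ x : ℝ, x < 1 → deriv κ x < 0)
    (m₁ m₂ : ℝ) (hm₁ : 0 < m₁) (hm₂ : 0 < m₂)
    (𝒱 : Set (ℝ × ℝ × ℝ × ℝ)) (h𝒱 : IsCompact 𝒱)
    (a b e₁ e₂ : ℝ) (ha : 0 < a) (hb : b < 1) (he₂ : e₂ < κ 0)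
    (h𝒱Q : ∀ h ∈ 𝒱, h.1 ∈ Set.Icc a b)
    (h𝒱E : ∀ h ∈ 𝒱, h.2.2.1 ∈ Set.Icc e₁ e₂ ∧ h.2.2.2 ∈ Set.Icc e₁ e₂) :
    ∃ δ₀ > (0:ℝ), ∃ ε₀ > (0:ℝ), ∃ C > (0:ℝ),
      ∀ δ ∈ Set.Ioc (0:ℝ) δ₀, ∀ ε ∈ Set.Ioc (0:ℝ) ε₀,
      ∀ Q W q₁ v₁ q₂ v₂ : ℝ → ℝ, ∀ 𝒯' 𝒯 : ℝ, 𝒯' ≤ 𝒯 →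
      (∀ s ∈ Set.Icc 𝒯' 𝒯,
        HasDerivAt Q (ε * W s) s ∧
        HasDerivAt W (ε * (-(deriv κ ((Q s - q₁ s) / δ) / δ)
          + deriv κ ((q₂ s - Q s) / δ) / δ)) s ∧
        HasDerivAt q₁ (v₁ s) s ∧
        HasDerivAt v₁ ((-(deriv κ (q₁ s / δ) / δ)
          + deriv κ ((Q s - q₁ s) / δ) / δ) / m₁) s ∧
        HasDerivAt q₂ (v₂ s) s ∧
        HasDerivAt v₂ ((-(deriv κ ((q₂ s - Q s) / δ) / δ)
          + deriv κ ((1 - q₂ s) / δ) / δ) / m₂) s) →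
      (∀ s ∈ Set.Icc 𝒯' 𝒯,
        (Q s, W s,
         m₁ * (v₁ s)^2 / 2 + κ (q₁ s / δ) + κ ((Q s - q₁ s) / δ),
         m₂ * (v₂ s)^2 / 2 + κ ((q₂ s - Q s) / δ) + κ ((1 - q₂ s) / δ)) ∈ 𝒱) →
      (∫ s in 𝒯'..𝒯,
          (|deriv κ ((Q s - q₁ s) / δ) / δ| + |deriv κ ((q₂ s - Q s) / δ) / δ|))
        ≤ C * max 1 (𝒯 - 𝒯') := by
  have hκ := IsSoftCorePotential.of_contDiff hκC2 hκ0 hκ'neg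
  have hκ₀ : 0 < κ 0 := (hκ0 1 le_rfl).symm.trans_lt <|
    strictAntiOn_of_deriv_neg (convex_Iic 1) hκ.differentiable.continuous.continuousOn
      (by simpa using hκ'neg) (by simp) (by simp) zero_lt_one
  obtain ⟨R, hR, h𝒱R⟩ := h𝒱.isBounded.exists_pos_norm_le
  set c := min a (1 - b)
  have hc : 0 < c := lt_min ha (sub_pos.2 hb)
  refine ⟨c / 4, by positivity, 1, one_pos,
    4 / c * (m₁ * √(2 * κ 0 / m₁) * (√(2 * κ 0 / m₁) + R + 1)
      + m₂ * √(2 * κ 0 / m₂) * (√(2 * κ 0 / m₂) + R + 1)), by positivity, ?_⟩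
  rintro δ ⟨hδ, hδc⟩ ε ⟨hε, hε1⟩ Q W q₁ v₁ q₂ v₂ T' T hT hode hmem
  refine soft_piston_integral_le hκ hm₁ hm₂ hc hδ hδc hT hode (fun s hs => ?_) (fun s hs => ?_)
    (fun s hs => (h𝒱E _ (hmem s hs)).1.2.trans_lt he₂)
    (fun s hs => (h𝒱E _ (hmem s hs)).2.2.trans_lt he₂)
  · have hQs := h𝒱Q _ (hmem s hs)
    exact ⟨(min_le_left _ _).trans hQs.1, by linarith [min_le_right a (1 - b), hQs.2]⟩
  · have hWs : |W s| ≤ R := ((norm_fst_le _).trans (norm_snd_le _)).trans (h𝒱R _ (hmem s hs))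
    rw [abs_mul, abs_of_pos hε]
    exact (mul_le_of_le_one_left (abs_nonneg _) hε1).trans hWs

/-- **Lemma (Integral bound on the interaction forces along soft-core orbits).**
For the soft-core piston with one gas particle on each side, there are `δ₀, ε₀, C > 0`
such that for all `δ ∈ (0,δ₀]`, `ε ∈ (0,ε₀]`, every solution of the soft-core equations
and all times `𝒯' ≤ 𝒯` during which the slow variables remain in `𝒱`, the integral of
`|κ_δ'(Q−q₁)| + |κ_δ'(q₂−Q)|` over `[𝒯',𝒯]` is at most `C·max(1, 𝒯−𝒯')`. -/
theorem one_d_smooth_intbound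
    (κ : ℝ → ℝ) (hκC2 : ContDiff ℝ 2 κ)
    (hκ0 : ∀ x : ℝ, 1 ≤ x → κ x = 0) (hκ'neg : ∀ x : ℝ, x < 1 → deriv κ x < 0)
    (m₁ m₂ : ℝ) (hm₁ : 0 < m₁) (hm₂ : 0 < m₂)
    (𝒱 : Set (ℝ × ℝ × ℝ × ℝ)) (h𝒱 : IsCompact 𝒱)
    (a b e₁ e₂ : ℝ) (ha : 0 < a) (hb : b < 1) (he₁ : 0 < e₁) (he₂ : e₂ < κ 0)
    (h𝒱Q : ∀ h ∈ 𝒱, h.1 ∈ Set.Icc a b)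
    (h𝒱E : ∀ h ∈ 𝒱, h.2.2.1 ∈ Set.Icc e₁ e₂ ∧ h.2.2.2 ∈ Set.Icc e₁ e₂) :
    ∃ δ₀ > (0:ℝ), ∃ ε₀ > (0:ℝ), ∃ C > (0:ℝ),
      ∀ δ ∈ Set.Ioc (0:ℝ) δ₀, ∀ ε ∈ Set.Ioc (0:ℝ) ε₀,
      ∀ Q W q₁ v₁ q₂ v₂ : ℝ → ℝ, ∀ 𝒯' 𝒯 : ℝ, 𝒯' ≤ 𝒯 →
      (∀ s ∈ Set.Icc 𝒯' 𝒯,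
        HasDerivAt Q (ε * W s) s ∧
        HasDerivAt W (ε * (-(deriv κ ((Q s - q₁ s) / δ) / δ)
          + deriv κ ((q₂ s - Q s) / δ) / δ)) s ∧
        HasDerivAt q₁ (v₁ s) s ∧
        HasDerivAt v₁ ((-(deriv κ (q₁ s / δ) / δ)
          + deriv κ ((Q s - q₁ s) / δ) / δ) / m₁) s ∧
        HasDerivAt q₂ (v₂ s) s ∧
        HasDerivAt v₂ ((-(deriv κ ((q₂ s - Q s) / δ) / δ)
          + deriv κ ((1 - q₂ s) / δ) / δ) / m₂) s) →
      (∀ s ∈ Set.Icc 𝒯' 𝒯,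
        (Q s, W s,
         m₁ * (v₁ s)^2 / 2 + κ (q₁ s / δ) + κ ((Q s - q₁ s) / δ),
         m₂ * (v₂ s)^2 / 2 + κ ((q₂ s - Q s) / δ) + κ ((1 - q₂ s) / δ)) ∈ 𝒱) →
      (∫ s in 𝒯'..𝒯,
          (|deriv κ ((Q s - q₁ s) / δ) / δ| + |deriv κ ((q₂ s - Q s) / δ) / δ|))
        ≤ C * max 1 (𝒯 - 𝒯') :=
  one_d_smooth_intbound_general κ hκC2 hκ0 hκ'neg m₁ m₂ hm₁ hm₂ 𝒱 h𝒱 a b e₁ e₂ ha hb he₂ h𝒱Q h𝒱E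
end

section
/- Integral identity for induced transformations (Proposition `inducing`): Let (Ω, ℬ, ν) be a probability space and F : Ω → Ω an invertible, ergodic, ν-preserving transformation (F and F⁻¹ measurable). Let Ω̂ ∈ ℬ with 0 < ν(Ω̂) < 1, let R(ω) = inf{n ≥ 1 : Fⁿω ∈ Ω̂} be the first return time to Ω̂ (finite ν-a.e. on Ω̂), and let ν̂ = ν(· ∩ Ω̂)/ν(Ω̂). If ζ : Ω → [0,∞) is ν-integrable, then the induced function ζ̂ := Σ_{n=0}^{R−1} ζ∘Fⁿ, defined ν̂-a.e. on Ω̂, is ν̂-integrable, and ∫_{Ω̂} ζ̂ dν̂ = (1/ν(Ω̂)) · ∫_Ω ζ dν. -/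
/-!
Kac's formula. Cut every orbit at its visits to `s`: the sets `fⁿ(s ∩ {n < R})` are pairwise
disjoint by injectivity of `f`, and they cover `⋃ₙ fⁿ(s)`. Since `f` preserves `μ`, the integral of
`g ∘ fⁿ` over `s ∩ {n < R}` is the integral of `g` over the `n`-th of these sets, so
`∫_s Σ_{n<R} g ∘ fⁿ dμ = ∫_{⋃ₙ fⁿ(s)} g dμ`. The union contains `s` and is mapped into itself by
`f`, so ergodicity gives it full measure. The real-valued statement follows through `ℝ≥0∞`, where
finiteness of this integral is the integrability of `ζ̂`.
-/

open MeasureTheory Set Function Filter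
open scoped ENNReal

section FirstReturn

variable {α : Type*}

/-- `sInf ∅ = 0`: a point that never returns to `s` gets return time `0`. -/
noncomputable def firstReturnTime (f : α → α) (s : Set α) (x : α) : ℕ :=
  sInf {n | 1 ≤ n ∧ f^[n] x ∈ s}

def noReturnUpTo (f : α → α) (s : Set α) (n : ℕ) : Set α :=
  ⋂ j ∈ Icc 1 n, f^[j] ⁻¹' sᶜ

variable {f : α → α} {s : Set α}

lemma mem_noReturnUpTo {n : ℕ} {x : α} :
    x ∈ noReturnUpTo f s n ↔ ∀ j, 1 ≤ j → j ≤ n → f^[j] x ∉ s := by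
  simp [noReturnUpTo]

lemma lt_firstReturnTime_iff {x : α} (hx : ∃ n, 1 ≤ n ∧ f^[n] x ∈ s) {n : ℕ} :
    n < firstReturnTime f s x ↔ x ∈ noReturnUpTo f s n := by
  rw [mem_noReturnUpTo]
  constructor
  · intro h j hj hjn hjs
    have := Nat.sInf_le (show j ∈ {n | 1 ≤ n ∧ f^[n] x ∈ s} from ⟨hj, hjs⟩)
    exact (this.trans hjn).not_gt h
  · intro h
    obtain ⟨hpos, hmem⟩ := Nat.sInf_mem hx
    by_contra! hle
    exact h _ hpos hle hmem

lemma firstReturnTime_eq_zero {x : α} (hx : ¬∃ n, 1 ≤ n ∧ f^[n] x ∈ s) :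
    firstReturnTime f s x = 0 :=
  Nat.sInf_eq_zero.2 (.inr (eq_empty_of_forall_notMem fun n hn => hx ⟨n, hn⟩))

lemma sum_range_firstReturnTime_eq_tsum {M : Type*} [AddCommMonoid M] [TopologicalSpace M]
    {x : α} (hx : ∃ n, 1 ≤ n ∧ f^[n] x ∈ s) (g : α → M) :
    ∑ n ∈ Finset.range (firstReturnTime f s x), g (f^[n] x) =
      ∑' n, (noReturnUpTo f s n).indicator (fun y => g (f^[n] y)) x := by
  rw [tsum_eq_sum (s := Finset.range _) fun n hn =>
    indicator_of_notMem (mt (lt_firstReturnTime_iff hx).2 (by simpa using hn)) _]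
  exact Finset.sum_congr rfl fun n hn =>
    (indicator_of_mem ((lt_firstReturnTime_iff hx).1 (Finset.mem_range.1 hn))
      (fun y => g (f^[n] y))).symm

lemma pairwise_disjoint_image_iterate_noReturnUpTo (hf : Injective f) :
    Pairwise (Disjoint on fun n => f^[n] '' (s ∩ noReturnUpTo f s n)) := by
  refine (pairwise_disjoint_on _).2 fun m n hmn => disjoint_left.2 ?_
  rintro _ ⟨x, ⟨hxs, -⟩, rfl⟩ ⟨y, ⟨-, hy⟩, hyx⟩
  rw [← Nat.add_sub_cancel' hmn.le, iterate_add_apply] at hyx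
  rw [← (hf.iterate m) hyx] at hxs
  exact mem_noReturnUpTo.1 hy (n - m) (by omega) (by omega) hxs

lemma iUnion_image_iterate_noReturnUpTo :
    ⋃ n, f^[n] '' (s ∩ noReturnUpTo f s n) = ⋃ n, f^[n] '' s := by
  refine subset_antisymm (iUnion_mono fun n => image_mono inter_subset_left) ?_
  intro y hy
  classical
  have hex : ∃ n, y ∈ f^[n] '' s := mem_iUnion.1 hy
  obtain ⟨x, hxs, hxy⟩ := Nat.find_spec hex
  refine mem_iUnion.2 ⟨Nat.find hex, x, ⟨hxs, mem_noReturnUpTo.2 fun j hj hjn hjs => ?_⟩, hxy⟩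
  -- an earlier visit `f^[j] x ∈ s` would exhibit `y` as an earlier iterate of `s`
  refine Nat.find_min hex (m := Nat.find hex - j) (by omega) ⟨f^[j] x, hjs, ?_⟩
  rw [← iterate_add_apply, Nat.sub_add_cancel hjn, hxy]

variable [MeasurableSpace α]

lemma measurableSet_noReturnUpTo (hf : Measurable f) (hs : MeasurableSet s) (n : ℕ) :
    MeasurableSet (noReturnUpTo f s n) :=
  .biInter (to_countable _) fun j _ => hf.iterate j hs.compl

lemma measurable_firstReturnTime (hf : Measurable f) (hs : MeasurableSet s) :
    Measurable (firstReturnTime f s) := by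
  refine measurable_of_Ioi fun n => ?_
  have : firstReturnTime f s ⁻¹' Ioi n =
      (⋃ m ∈ Ici 1, f^[m] ⁻¹' s) ∩ noReturnUpTo f s n := by
    ext x
    simp only [mem_preimage, mem_Ioi, mem_inter_iff, mem_iUnion, mem_Ici, exists_prop]
    by_cases hx : ∃ m, 1 ≤ m ∧ f^[m] x ∈ s
    · rw [lt_firstReturnTime_iff hx]
      exact ⟨fun h => ⟨hx, h⟩, And.right⟩
    · rw [firstReturnTime_eq_zero hx]
      exact ⟨fun h => absurd h n.not_lt_zero, fun h => absurd h.1 hx⟩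
  rw [this]
  exact (MeasurableSet.biUnion (to_countable _) fun m _ => hf.iterate m hs).inter
    (measurableSet_noReturnUpTo hf hs n)

lemma MeasurableEmbedding.iterate (hf : MeasurableEmbedding f) (n : ℕ) :
    MeasurableEmbedding f^[n] := by
  induction n with
  | zero => exact .id
  | succ n ih => exact ih.comp hf

lemma AEMeasurable.eval_measurable_index {β : Type*} [MeasurableSpace β] {μ : Measure α}
    {g : ℕ → α → β} (hg : ∀ n, AEMeasurable (g n) μ) {N : α → ℕ} (hN : Measurable N) :
    AEMeasurable (fun x => g (N x) x) μ := by
  refine ⟨fun x => (hg (N x)).mk _ x,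
    (measurable_from_prod_countable_left (f := fun p : α × ℕ => (hg p.2).mk _ p.1)
      fun n => (hg n).measurable_mk).comp (measurable_id.prodMk hN), ?_⟩
  filter_upwards [ae_all_iff.2 fun n => (hg n).ae_eq_mk] with x hx using hx (N x)

variable {μ : Measure α}

namespace MeasureTheory.MeasurePreserving

lemma tsum_setLIntegral_noReturnUpTo (hf : MeasurePreserving f μ μ)
    (hfe : MeasurableEmbedding f) (hs : MeasurableSet s) (g : α → ℝ≥0∞) :
    ∑' n, ∫⁻ x in s ∩ noReturnUpTo f s n, g (f^[n] x) ∂μ = ∫⁻ y in ⋃ n, f^[n] '' s, g y ∂μ := by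
  have hmeas (n : ℕ) : MeasurableSet (f^[n] '' (s ∩ noReturnUpTo f s n)) :=
    (hfe.iterate n).measurableSet_image.2 (hs.inter (measurableSet_noReturnUpTo hf.measurable hs n))
  rw [← iUnion_image_iterate_noReturnUpTo,
    lintegral_iUnion hmeas (pairwise_disjoint_image_iterate_noReturnUpTo hfe.injective)]
  exact tsum_congr fun n => (hf.iterate n).setLIntegral_comp_emb (hfe.iterate n) g _

lemma setLIntegral_sum_range_firstReturnTime (hf : MeasurePreserving f μ μ)
    (hfe : MeasurableEmbedding f) (hs : MeasurableSet s)
    (hret : ∀ᵐ x ∂μ.restrict s, ∃ n, 1 ≤ n ∧ f^[n] x ∈ s) {g : α → ℝ≥0∞} (hg : AEMeasurable g μ) :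
    ∫⁻ x in s, ∑ n ∈ Finset.range (firstReturnTime f s x), g (f^[n] x) ∂μ =
      ∫⁻ y in ⋃ n, f^[n] '' s, g y ∂μ := by
  have hN := measurableSet_noReturnUpTo hf.measurable hs
  have hgn (n : ℕ) : AEMeasurable (fun x => g (f^[n] x)) μ :=
    hg.comp_quasiMeasurePreserving (hf.iterate n).quasiMeasurePreserving
  rw [lintegral_congr_ae (hret.mono fun x hx => sum_range_firstReturnTime_eq_tsum hx g),
    lintegral_tsum fun n => ((hgn n).indicator (hN n)).restrict,
    ← hf.tsum_setLIntegral_noReturnUpTo hfe hs g]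
  refine tsum_congr fun n => ?_
  rw [lintegral_indicator (hN n), Measure.restrict_restrict (hN n), inter_comm]

end MeasureTheory.MeasurePreserving

lemma Ergodic.ae_mem_iUnion_image_iterate [IsFiniteMeasure μ] (hf : Ergodic f μ)
    (hfe : MeasurableEmbedding f) (hs : MeasurableSet s) (hμs : μ s ≠ 0) :
    ∀ᵐ y ∂μ, y ∈ ⋃ n, f^[n] '' s := by
  have hV : MeasurableSet (⋃ n, f^[n] '' s) :=
    .iUnion fun n => (hfe.iterate n).measurableSet_image.2 hs
  have hfV : f '' ⋃ n, f^[n] '' s ⊆ ⋃ n, f^[n] '' s := by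
    rintro _ ⟨_, hy, rfl⟩
    obtain ⟨n, x, hx, rfl⟩ := mem_iUnion.1 hy
    exact mem_iUnion.2 ⟨n + 1, x, hx, iterate_succ_apply' f n x⟩
  rcases hf.ae_empty_or_univ_of_image_ae_le hV.nullMeasurableSet hfV.eventuallyLE with h | h
  · exact absurd (measure_mono_null (subset_iUnion_of_subset 0 (by simp))
      (ae_eq_empty.1 h)) hμs
  · exact ae_eq_univ.1 h

lemma Ergodic.setLIntegral_sum_range_firstReturnTime [IsFiniteMeasure μ] (hf : Ergodic f μ)
    (hfe : MeasurableEmbedding f) (hs : MeasurableSet s) (hμs : μ s ≠ 0)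
    (hret : ∀ᵐ x ∂μ.restrict s, ∃ n, 1 ≤ n ∧ f^[n] x ∈ s) {g : α → ℝ≥0∞} (hg : AEMeasurable g μ) :
    ∫⁻ x in s, ∑ n ∈ Finset.range (firstReturnTime f s x), g (f^[n] x) ∂μ = ∫⁻ y, g y ∂μ := by
  rw [hf.toMeasurePreserving.setLIntegral_sum_range_firstReturnTime hfe hs hret hg,
    Measure.restrict_eq_self_of_ae_mem (hf.ae_mem_iUnion_image_iterate hfe hs hμs)]

end FirstReturn

theorem inducing_integral_general
    {Ω : Type*} [MeasurableSpace Ω] (ν : Measure Ω) [IsProbabilityMeasure ν]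
    (F : Ω ≃ᵐ Ω) (hF : Ergodic F ν)
    (Ωhat : Set Ω) (hΩhat : MeasurableSet Ωhat) (hpos : 0 < ν Ωhat)
    (R : Ω → ℕ) (hR : ∀ ω, R ω = sInf {n : ℕ | 1 ≤ n ∧ (⇑F)^[n] ω ∈ Ωhat})
    (hRfin : ∀ᵐ ω ∂(ν.restrict Ωhat), ∃ n : ℕ, 1 ≤ n ∧ (⇑F)^[n] ω ∈ Ωhat)
    (ζ : Ω → ℝ) (hζnn : ∀ ω, 0 ≤ ζ ω) (hζ : Integrable ζ ν) :
    Integrable (fun ω => ∑ n ∈ Finset.range (R ω), ζ ((⇑F)^[n] ω))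
        ((ν Ωhat)⁻¹ • ν.restrict Ωhat) ∧
    ∫ ω, (∑ n ∈ Finset.range (R ω), ζ ((⇑F)^[n] ω)) ∂((ν Ωhat)⁻¹ • ν.restrict Ωhat)
      = (ν Ωhat).toReal⁻¹ * ∫ ω, ζ ω ∂ν := by
  obtain rfl : R = firstReturnTime F Ωhat := funext hR
  set ζhat := fun ω => ∑ n ∈ Finset.range (firstReturnTime F Ωhat ω), ζ ((⇑F)^[n] ω)
  have hζhat_nonneg : 0 ≤ᵐ[ν.restrict Ωhat] ζhat :=
    ae_of_all _ fun ω => Finset.sum_nonneg fun n _ => hζnn _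
  have hζhat_meas : AEStronglyMeasurable ζhat (ν.restrict Ωhat) :=
    (AEMeasurable.eval_measurable_index (fun k => Finset.aemeasurable_fun_sum _ fun n _ =>
        (hζ.aemeasurable.comp_quasiMeasurePreserving
          (hF.toMeasurePreserving.iterate n).quasiMeasurePreserving).restrict)
      (measurable_firstReturnTime F.measurable hΩhat)).aestronglyMeasurable
  have hkac : ∫⁻ ω in Ωhat, ENNReal.ofReal (ζhat ω) ∂ν = ∫⁻ ω, ENNReal.ofReal (ζ ω) ∂ν := by
    simp only [ζhat, ENNReal.ofReal_sum_of_nonneg fun n _ => hζnn _]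
    exact hF.setLIntegral_sum_range_firstReturnTime F.measurableEmbedding hΩhat hpos.ne' hRfin
      hζ.aemeasurable.ennreal_ofReal
  have hζhat_int : Integrable ζhat (ν.restrict Ωhat) :=
    (lintegral_ofReal_ne_top_iff_integrable hζhat_meas hζhat_nonneg).1
      (hkac ▸ hζ.lintegral_lt_top.ne)
  refine ⟨hζhat_int.smul_measure (ENNReal.inv_ne_top.2 hpos.ne'), ?_⟩
  rw [integral_smul_measure, integral_eq_lintegral_of_nonneg_ae hζhat_nonneg hζhat_meas, hkac,
    ← integral_eq_lintegral_of_nonneg_ae (ae_of_all _ hζnn) hζ.1, ENNReal.toReal_inv, smul_eq_mul]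

/-- **Proposition (Integral identity for induced transformations).**
If `F` is an invertible ergodic measure-preserving transformation of a probability space,
`Ωhat` has measure in `(0,1)`, `R` is the first return time to `Ωhat`, and `ζ ≥ 0` is
`ν`-integrable, then `ζhat = Σ_{n<R} ζ∘Fⁿ` is integrable for the normalized restricted
measure `ν̂ = ν(·∩Ωhat)/ν(Ωhat)` and `∫ ζhat dν̂ = (1/ν(Ωhat))·∫ ζ dν`. -/
theorem inducing_integral
    {Ω : Type*} [MeasurableSpace Ω] (ν : Measure Ω) [IsProbabilityMeasure ν]
    (F : Ω ≃ᵐ Ω) (hF : Ergodic F ν)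
    (Ωhat : Set Ω) (hΩhat : MeasurableSet Ωhat) (hpos : 0 < ν Ωhat) (hlt : ν Ωhat < 1)
    (R : Ω → ℕ) (hR : ∀ ω, R ω = sInf {n : ℕ | 1 ≤ n ∧ (⇑F)^[n] ω ∈ Ωhat})
    (hRfin : ∀ᵐ ω ∂(ν.restrict Ωhat), ∃ n : ℕ, 1 ≤ n ∧ (⇑F)^[n] ω ∈ Ωhat)
    (ζ : Ω → ℝ) (hζnn : ∀ ω, 0 ≤ ζ ω) (hζ : Integrable ζ ν) :
    Integrable (fun ω => ∑ n ∈ Finset.range (R ω), ζ ((⇑F)^[n] ω))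
        ((ν Ωhat)⁻¹ • ν.restrict Ωhat) ∧
    ∫ ω, (∑ n ∈ Finset.range (R ω), ζ ((⇑F)^[n] ω)) ∂((ν Ωhat)⁻¹ • ν.restrict Ωhat)
      = (ν Ωhat).toReal⁻¹ * ∫ ω, ζ ω ∂ν :=
  inducing_integral_general ν F hF Ωhat hΩhat hpos R hR hRfin ζ hζnn hζ
end

section
/- Sweep-out estimate for measure-preserving flows (key inequality in the proof of Lemma `no_vertical`): Let (M, ℬ, μ) be a probability space and (φ_t)_{t∈ℝ} a flow of invertible bi-measurable μ-preserving transformations (φ_0 = id, φ_{t+s} = φ_t ∘ φ_s, and μ(φ_t(A)) = μ(A) for all A ∈ ℬ, t ∈ ℝ). Let B ∈ ℬ, γ > 0, and n ∈ ℕ, and assume that the sets ⋃_{t∈[0,nγ]} φ_t(B), ⋃_{t∈[0,nγ]} φ_{−t}(B), and E := (⋃_{t∈[0,γ]} φ_t(B)) \ B are measurable. Then μ(⋃_{t∈[0,nγ]} φ_{−t}(B)) = μ(⋃_{t∈[0,nγ]} φ_t(B)) ≤ μ(B) + n·μ(E). -/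
/-!
Write `S(a) = ⋃_{t ∈ [0,a]} φ_t B` for the forward sweep. A point `φ_t b` with `t ∈ (c, c+γ]`
equals `φ_c (φ_{t-c} b)` with `φ_{t-c} b ∈ S(γ)`, so it lies either in `φ_c B ⊆ S(c)` or in
`φ_c E`, where `E = S(γ) \ B`. Hence `S(c+γ) ⊆ S(c) ∪ φ_c E`, and since `φ_c` preserves `μ`, each further step of
length `γ` adds at most `μ E`. The backward sweep is the image `φ_{-a} S(a)`, so it has the
same measure.
-/

open MeasureTheory Set

theorem MeasureTheory.MeasurePreserving.measure_image_equiv {α β : Type*} [MeasurableSpace α]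
    [MeasurableSpace β] {μa : Measure α} {μb : Measure β} {e : α ≃ᵐ β}
    (he : MeasurePreserving e μa μb) (s : Set α) : μb (e '' s) = μa s := by
  rw [e.image_eq_preimage_symm, (he.symm e).measure_preimage_equiv]

namespace Flow

variable {M : Type*}

def sweep (φ : ℝ → M → M) (B : Set M) (a : ℝ) : Set M :=
  ⋃ t ∈ Icc (0 : ℝ) a, φ t '' B

section

variable {φ : ℝ → M → M} {B : Set M}

theorem sweep_zero : sweep φ B 0 = φ 0 '' B := by
  rw [sweep, Icc_self, biUnion_singleton]

theorem image_subset_sweep {a t : ℝ} (ht : t ∈ Icc 0 a) : φ t '' B ⊆ sweep φ B a :=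
  subset_biUnion_of_mem (u := fun t ↦ φ t '' B) ht

section Semiflow

variable (hφ : ∀ s t x, φ (s + t) x = φ s (φ t x))
include hφ

theorem sweep_add_subset {c γ : ℝ} (hc : 0 ≤ c) :
    sweep φ B (c + γ) ⊆ sweep φ B c ∪ φ c '' (sweep φ B γ \ B) := by
  intro x hx
  simp only [sweep, mem_iUnion, exists_prop] at hx
  obtain ⟨t, ⟨ht₀, ht⟩, b, hb, rfl⟩ := hx
  by_cases htc : t ≤ c
  · exact Or.inl (image_subset_sweep ⟨ht₀, htc⟩ (mem_image_of_mem _ hb))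
  have hsplit : φ t b = φ c (φ (t - c) b) := by rw [← hφ, add_sub_cancel]
  have hrest : φ (t - c) b ∈ sweep φ B γ :=
    image_subset_sweep ⟨by linarith, by linarith⟩ (mem_image_of_mem _ hb)
  rw [hsplit]
  by_cases hB : φ (t - c) b ∈ B
  · exact Or.inl (image_subset_sweep ⟨hc, le_rfl⟩ (mem_image_of_mem _ hB))
  · exact Or.inr (mem_image_of_mem _ ⟨hrest, hB⟩)

theorem sweep_neg_eq_image (a : ℝ) : sweep (fun t ↦ φ (-t)) B a = φ (-a) '' sweep φ B a := by
  have hreflect : ∀ t b, φ (-a) (φ (a - t) b) = φ (-t) b := fun t b ↦ by rw [← hφ]; ring_nf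
  ext x
  simp only [sweep, mem_image, mem_iUnion, exists_prop]
  constructor
  · rintro ⟨t, ⟨ht₀, hta⟩, b, hb, rfl⟩
    exact ⟨_, ⟨a - t, ⟨by linarith, by linarith⟩, b, hb, rfl⟩, hreflect t b⟩
  · rintro ⟨_, ⟨t, ⟨ht₀, hta⟩, b, hb, rfl⟩, rfl⟩
    refine ⟨a - t, ⟨by linarith, by linarith⟩, b, hb, ?_⟩
    rw [← hreflect, sub_sub_cancel]

end Semiflow

end

theorem measure_sweep_nat_mul_le [MeasurableSpace M] {μ : Measure M}
    {φ : ℝ → M ≃ᵐ M} (hφ : ∀ s t x, φ (s + t) x = φ s (φ t x))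
    (hpres : ∀ t, MeasurePreserving (φ t) μ μ) (B : Set M) {γ : ℝ} (hγ : 0 ≤ γ) (n : ℕ) :
    μ (sweep (fun t ↦ φ t) B (n * γ))
      ≤ μ B + n * μ (sweep (fun t ↦ φ t) B γ \ B) := by
  set E := sweep (fun t ↦ φ t) B γ \ B
  induction n with
  | zero => simp [sweep_zero, (hpres 0).measure_image_equiv]
  | succ k ih =>
    calc μ (sweep (fun t ↦ φ t) B ((k + 1 : ℕ) * γ))
        ≤ μ (sweep (fun t ↦ φ t) B (k * γ) ∪ φ (k * γ) '' E) := by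
          rw [Nat.cast_succ, add_one_mul]
          exact measure_mono (sweep_add_subset hφ (by positivity))
      _ ≤ μ (sweep (fun t ↦ φ t) B (k * γ)) + μ (φ (k * γ) '' E) := measure_union_le _ _
      _ ≤ μ B + k * μ E + μ E := by rw [(hpres _).measure_image_equiv]; gcongr
      _ = μ B + (k + 1 : ℕ) * μ E := by push_cast; ring

end Flow

theorem sweep_out_general
    {M : Type*} [MeasurableSpace M] (μ : Measure M)
    (φ : ℝ → M ≃ᵐ M)
    (hgrp : ∀ s t x, φ (s + t) x = φ s (φ t x))
    (hpres : ∀ t, MeasurePreserving (φ t) μ μ)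
    (B : Set M) (γ : ℝ) (hγ : 0 < γ) (n : ℕ) :
    μ (⋃ t ∈ Set.Icc (0:ℝ) (n * γ), φ (-t) '' B)
        = μ (⋃ t ∈ Set.Icc (0:ℝ) (n * γ), φ t '' B) ∧
    μ (⋃ t ∈ Set.Icc (0:ℝ) (n * γ), φ t '' B)
        ≤ μ B + n * μ ((⋃ t ∈ Set.Icc (0:ℝ) γ, φ t '' B) \ B) := by
  refine ⟨?_, Flow.measure_sweep_nat_mul_le hgrp hpres B hγ.le n⟩
  change μ (Flow.sweep (fun t ↦ φ (-t)) B _) = μ (Flow.sweep (fun t ↦ φ t) B _)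
  rw [Flow.sweep_neg_eq_image (φ := fun t ↦ φ t) hgrp, (hpres _).measure_image_equiv]

/-- **Sweep-out estimate for measure-preserving flows.**
For a measure-preserving flow `φ` on a probability space, a set `B`, `γ > 0`, and
`n ∈ ℕ`, the measure of the backward sweep `⋃_{t∈[0,nγ]} φ_{−t}(B)` equals that of the
forward sweep `⋃_{t∈[0,nγ]} φ_t(B)`, which is at most
`μ(B) + n·μ((⋃_{t∈[0,γ]} φ_t(B)) \ B)`. -/
theorem sweep_out
    {M : Type*} [MeasurableSpace M] (μ : Measure M) [IsProbabilityMeasure μ]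
    (φ : ℝ → M ≃ᵐ M)
    (hid : ∀ x, φ 0 x = x)
    (hgrp : ∀ s t x, φ (s + t) x = φ s (φ t x))
    (hpres : ∀ t, MeasurePreserving (φ t) μ μ)
    (B : Set M) (hB : MeasurableSet B) (γ : ℝ) (hγ : 0 < γ) (n : ℕ)
    (hmeas₁ : MeasurableSet (⋃ t ∈ Set.Icc (0:ℝ) (n * γ), φ t '' B))
    (hmeas₂ : MeasurableSet (⋃ t ∈ Set.Icc (0:ℝ) (n * γ), φ (-t) '' B))
    (hmeasE : MeasurableSet ((⋃ t ∈ Set.Icc (0:ℝ) γ, φ t '' B) \ B)) :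
    μ (⋃ t ∈ Set.Icc (0:ℝ) (n * γ), φ (-t) '' B)
        = μ (⋃ t ∈ Set.Icc (0:ℝ) (n * γ), φ t '' B) ∧
    μ (⋃ t ∈ Set.Icc (0:ℝ) (n * γ), φ t '' B)
        ≤ μ B + n * μ ((⋃ t ∈ Set.Icc (0:ℝ) γ, φ t '' B) \ B) :=
  sweep_out_general μ φ hgrp hpres B γ hγ n
end
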